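/- arXiv:1710.08703 — 14 statements merged into one kernel-verified Lean document; each statement's English description precedes it below -/
import Mathlib

section
/- Let E and F be n×n idempotent matrices with nonnegative real entries such that every entry of EF - FE is nonnegative. Then (EF)²E = EFE. -/
/-!
Writing `≤` entrywise, multiplication by nonnegative matrices is monotone, so `FE ≤ EF` gives
`EFE = (EF)(FE)E ≤ (EF)(EF)E = E(FE)(FE) ≤ E(EF)(FE) = EFE`,
where the outer equalities only use `E² = E` and `F² = F`.
-/

namespace Matrix

variable {l m n o α : Type*} [Fintype m]
  [Semiring α] [PartialOrder α] [IsOrderedRing α]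

theorem mul_apply_nonneg {A : Matrix l m α} {B : Matrix m n α}
    (hA : ∀ i j, 0 ≤ A i j) (hB : ∀ i j, 0 ≤ B i j) (i : l) (j : n) :
    0 ≤ (A * B) i j :=
  Finset.sum_nonneg fun k _ => mul_nonneg (hA i k) (hB k j)

theorem mul_apply_le_mul_apply_of_nonneg_left {C : Matrix l m α} {A B : Matrix m n α}
    (hC : ∀ i j, 0 ≤ C i j) (h : ∀ i j, A i j ≤ B i j) (i : l) (j : n) :
    (C * A) i j ≤ (C * B) i j :=
  Finset.sum_le_sum fun k _ => mul_le_mul_of_nonneg_left (h k j) (hC i k)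

theorem mul_apply_le_mul_apply_of_nonneg_right {A B : Matrix l m α} {C : Matrix m n α}
    (hC : ∀ i j, 0 ≤ C i j) (h : ∀ i j, A i j ≤ B i j) (i : l) (j : n) :
    (A * C) i j ≤ (B * C) i j :=
  Finset.sum_le_sum fun k _ => mul_le_mul_of_nonneg_right (h i k) (hC k j)

theorem mul_mul_apply_le_mul_mul_apply [Fintype n] {C : Matrix l m α} {A B : Matrix m n α}
    {D : Matrix n o α} (hC : ∀ i j, 0 ≤ C i j) (hD : ∀ i j, 0 ≤ D i j)
    (h : ∀ i j, A i j ≤ B i j) (i : l) (j : o) :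
    (C * A * D) i j ≤ (C * B * D) i j :=
  mul_apply_le_mul_apply_of_nonneg_right hD
    (mul_apply_le_mul_apply_of_nonneg_left hC h) i j

end Matrix

open Matrix in
theorem stmt_0 (n : ℕ) (E F : Matrix (Fin n) (Fin n) ℝ)
    (hE : E * E = E) (hF : F * F = F)
    (hEpos : ∀ i j, 0 ≤ E i j) (hFpos : ∀ i j, 0 ≤ F i j)
    (hcomm : ∀ i j, (F * E) i j ≤ (E * F) i j) :
    (E * F) * (E * F) * E = E * F * E := by
  have hEF : E * F * (F * E) * E = E * F * E := by
    rw [show E * F * (F * E) * E = E * (F * F) * (E * E) by noncomm_ring, hF, hE]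
  have hEEF : E * (E * F) * (F * E) = E * F * E := by
    rw [show E * (E * F) * (F * E) = (E * E) * (F * F) * E by noncomm_ring, hE, hF]
  have hEFE : E * (F * E) * (F * E) = E * F * (E * F) * E := by noncomm_ring
  have lower : ∀ i j, (E * F * E) i j ≤ (E * F * (E * F) * E) i j := by
    rw [← hEF]
    exact mul_mul_apply_le_mul_mul_apply (mul_apply_nonneg hEpos hFpos) hEpos hcomm
  have upper : ∀ i j, (E * F * (E * F) * E) i j ≤ (E * F * E) i j := by
    rw [← hEFE, ← hEEF]
    exact mul_mul_apply_le_mul_mul_apply hEpos (mul_apply_nonneg hFpos hEpos) hcomm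
  ext i j
  exact le_antisymm (upper i j) (lower i j)
end

section
/- Let E and F be n×n idempotent matrices with nonnegative real entries such that every entry of EF - FE is nonnegative. Then (FE)²F = FEF. -/
/-
Multiplying `FE ≤ EF` (entrywise) by the nonnegative idempotents on both sides gives
`(EF)² = E(FE)F ≤ E(EF)F = EF` and `FE = F(FE)E ≤ F(EF)E = (FE)²`. Hence
`(FE)²F = F(EF)² ≤ F(EF)` and `FEF = (FE)F ≤ (FE)²F`.
-/

namespace Matrix

variable {l m n o α : Type*} [Semiring α] [PartialOrder α] [IsOrderedRing α]

theorem mul_apply_mono_of_nonneg_left [Fintype m] {A : Matrix l m α} {X Y : Matrix m n α}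
    (hA : ∀ i j, 0 ≤ A i j) (h : ∀ i j, X i j ≤ Y i j) (i : l) (j : n) :
    (A * X) i j ≤ (A * Y) i j :=
  Finset.sum_le_sum fun k _ => mul_le_mul_of_nonneg_left (h k j) (hA i k)

theorem mul_apply_mono_of_nonneg_right [Fintype m] {X Y : Matrix l m α} {B : Matrix m n α}
    (hB : ∀ i j, 0 ≤ B i j) (h : ∀ i j, X i j ≤ Y i j) (i : l) (j : n) :
    (X * B) i j ≤ (Y * B) i j :=
  Finset.sum_le_sum fun k _ => mul_le_mul_of_nonneg_right (h i k) (hB k j)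

theorem mul_mul_apply_mono_of_nonneg [Fintype m] [Fintype n] {A : Matrix l m α}
    {X Y : Matrix m n α} {B : Matrix n o α} (hA : ∀ i j, 0 ≤ A i j) (hB : ∀ i j, 0 ≤ B i j)
    (h : ∀ i j, X i j ≤ Y i j) (i : l) (j : o) :
    (A * X * B) i j ≤ (A * Y * B) i j :=
  mul_apply_mono_of_nonneg_right hB (mul_apply_mono_of_nonneg_left hA h) i j

variable [Fintype n] {E F : Matrix n n α}

theorem mul_self_apply_le_of_idempotent_of_apply_le
    (hE : IsIdempotentElem E) (hF : IsIdempotentElem F) (hE₀ : ∀ i j, 0 ≤ E i j)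
    (hF₀ : ∀ i j, 0 ≤ F i j) (hFE : ∀ i j, (F * E) i j ≤ (E * F) i j) (i j : n) :
    (E * F * (E * F)) i j ≤ (E * F) i j :=
  calc (E * F * (E * F)) i j = (E * (F * E) * F) i j := by simp only [mul_assoc]
    _ ≤ (E * (E * F) * F) i j := mul_mul_apply_mono_of_nonneg hE₀ hF₀ hFE i j
    _ = (E * F) i j := by rw [← mul_assoc, hE.eq, mul_assoc, hF.eq]

theorem apply_le_mul_self_apply_of_idempotent_of_apply_le
    (hE : IsIdempotentElem E) (hF : IsIdempotentElem F) (hE₀ : ∀ i j, 0 ≤ E i j)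
    (hF₀ : ∀ i j, 0 ≤ F i j) (hFE : ∀ i j, (F * E) i j ≤ (E * F) i j) (i j : n) :
    (F * E) i j ≤ (F * E * (F * E)) i j :=
  calc (F * E) i j = (F * (F * E) * E) i j := by rw [← mul_assoc, hF.eq, mul_assoc, hE.eq]
    _ ≤ (F * (E * F) * E) i j := mul_mul_apply_mono_of_nonneg hF₀ hE₀ hFE i j
    _ = (F * E * (F * E)) i j := by simp only [mul_assoc]

end Matrix

open Matrix in
theorem stmt_1 (n : ℕ) (E F : Matrix (Fin n) (Fin n) ℝ)
    (hE : E * E = E) (hF : F * F = F)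
    (hEpos : ∀ i j, 0 ≤ E i j) (hFpos : ∀ i j, 0 ≤ F i j)
    (hcomm : ∀ i j, (F * E) i j ≤ (E * F) i j) :
    (F * E) * (F * E) * F = F * E * F := by
  ext i j
  apply le_antisymm
  · calc (F * E * (F * E) * F) i j = (F * (E * F * (E * F))) i j := by simp only [mul_assoc]
      _ ≤ (F * (E * F)) i j := mul_apply_mono_of_nonneg_left hFpos
          (mul_self_apply_le_of_idempotent_of_apply_le hE hF hEpos hFpos hcomm) i j
      _ = (F * E * F) i j := by rw [mul_assoc]
  · exact mul_apply_mono_of_nonneg_right hFpos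
      (apply_le_mul_self_apply_of_idempotent_of_apply_le hE hF hEpos hFpos hcomm) i j
end

section
/- Let E and F be n×n positive idempotent matrices with EF ≥ FE entrywise. Then the unital algebra generated by E and F is spanned by the nine matrices I, E, F, EF, FE, EFE, FEF, (EF)², (FE)²; in particular its dimension is at most 9. -/
theorem stmt_2 (n : ℕ) (E F : Matrix (Fin n) (Fin n) ℝ)
    (hE : E * E = E) (hF : F * F = F)
    (hEpos : ∀ i j, 0 ≤ E i j) (hFpos : ∀ i j, 0 ≤ F i j)
    (hcomm : ∀ i j, (F * E) i j ≤ (E * F) i j) :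
    Subalgebra.toSubmodule (Algebra.adjoin ℝ {E, F}) =
      Submodule.span ℝ ({1, E, F, E * F, F * E, E * F * E, F * E * F,
        (E * F) ^ 2, (F * E) ^ 2} : Set (Matrix (Fin n) (Fin n) ℝ)) ∧
    Module.finrank ℝ (Algebra.adjoin ℝ {E, F} : Subalgebra ℝ (Matrix (Fin n) (Fin n) ℝ)) ≤ 9 := by
  classical
  -- nonnegativity of products
  have mulnn : ∀ A B : Matrix (Fin n) (Fin n) ℝ, (∀ i j, 0 ≤ A i j) → (∀ i j, 0 ≤ B i j) →
      ∀ i j, 0 ≤ (A * B) i j := by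
    intro A B hA hB i j
    rw [Matrix.mul_apply]
    exact Finset.sum_nonneg fun k _ => mul_nonneg (hA i k) (hB k j)
  have hC : ∀ i j, 0 ≤ (E * F - F * E) i j := by
    intro i j
    simpa [Matrix.sub_apply, sub_nonneg] using hcomm i j
  have hE2 : ∀ X : Matrix (Fin n) (Fin n) ℝ, E * (E * X) = E * X := fun X => by
    rw [← mul_assoc, hE]
  have hF2 : ∀ X : Matrix (Fin n) (Fin n) ℝ, F * (F * X) = F * X := fun X => by
    rw [← mul_assoc, hF]
  -- key identity 1 : EFEFE = EFE
  have key1 : E * F * E * F * E = E * F * E := by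
    have e1 : E * (F * ((E * F - F * E) * E)) = E * F * E * F * E - E * F * E := by
      simp only [mul_sub, sub_mul, mul_assoc, hE, hF, hE2, hF2]
    have e2 : E * ((E * F - F * E) * (F * E)) = E * F * E - E * F * E * F * E := by
      simp only [mul_sub, sub_mul, mul_assoc, hE, hF, hE2, hF2]
    have h1 : ∀ i j, 0 ≤ (E * (F * ((E * F - F * E) * E))) i j :=
      mulnn _ _ hEpos (mulnn _ _ hFpos (mulnn _ _ hC hEpos))
    have h2 : ∀ i j, 0 ≤ (E * ((E * F - F * E) * (F * E))) i j :=
      mulnn _ _ hEpos (mulnn _ _ hC (mulnn _ _ hFpos hEpos))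
    ext i j
    have a1 := h1 i j
    have a2 := h2 i j
    rw [e1] at a1
    rw [e2] at a2
    simp only [Matrix.sub_apply] at a1 a2
    linarith
  -- key identity 2 : FEFEF = FEF
  have key2 : F * E * F * E * F = F * E * F := by
    have e1 : F * ((E * F - F * E) * (E * F)) = F * E * F * E * F - F * E * F := by
      simp only [mul_sub, sub_mul, mul_assoc, hE, hF, hE2, hF2]
    have e2 : F * (E * ((E * F - F * E) * F)) = F * E * F - F * E * F * E * F := by
      simp only [mul_sub, sub_mul, mul_assoc, hE, hF, hE2, hF2]
    have h1 : ∀ i j, 0 ≤ (F * ((E * F - F * E) * (E * F))) i j :=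
      mulnn _ _ hFpos (mulnn _ _ hC (mulnn _ _ hEpos hFpos))
    have h2 : ∀ i j, 0 ≤ (F * (E * ((E * F - F * E) * F))) i j :=
      mulnn _ _ hFpos (mulnn _ _ hEpos (mulnn _ _ hC hFpos))
    ext i j
    have a1 := h1 i j
    have a2 := h2 i j
    rw [e1] at a1
    rw [e2] at a2
    simp only [Matrix.sub_apply] at a1 a2
    linarith
  -- right-associated versions of the key identities
  have k1 : E * (F * (E * (F * E))) = E * (F * E) := by
    simpa only [mul_assoc] using key1
  have k1' : ∀ X : Matrix (Fin n) (Fin n) ℝ,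
      E * (F * (E * (F * (E * X)))) = E * (F * (E * X)) := by
    intro X
    calc E * (F * (E * (F * (E * X)))) = E * F * E * F * E * X := by
          simp only [mul_assoc]
      _ = E * F * E * X := by rw [key1]
      _ = E * (F * (E * X)) := by simp only [mul_assoc]
  have k2 : F * (E * (F * (E * F))) = F * (E * F) := by
    simpa only [mul_assoc] using key2
  have k2' : ∀ X : Matrix (Fin n) (Fin n) ℝ,
      F * (E * (F * (E * (F * X)))) = F * (E * (F * X)) := by
    intro X
    calc F * (E * (F * (E * (F * X)))) = F * E * F * E * F * X := by
          simp only [mul_assoc]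
      _ = F * E * F * X := by rw [key2]
      _ = F * (E * (F * X)) := by simp only [mul_assoc]
  set s : Set (Matrix (Fin n) (Fin n) ℝ) := {1, E, F, E * F, F * E, E * F * E, F * E * F,
      (E * F) ^ 2, (F * E) ^ 2} with hs
  set p : Submodule ℝ (Matrix (Fin n) (Fin n) ℝ) := Submodule.span ℝ s with hp
  -- the span is closed under multiplication on generators
  have hgen : ∀ a ∈ s, ∀ b ∈ s, a * b ∈ s := by
    intro a ha b hb
    simp only [hs, Set.mem_insert_iff, Set.mem_singleton_iff] at ha hb ⊢
    rcases ha with rfl|rfl|rfl|rfl|rfl|rfl|rfl|rfl|rfl <;>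
      rcases hb with rfl|rfl|rfl|rfl|rfl|rfl|rfl|rfl|rfl <;>
      simp only [pow_two, one_mul, mul_one, mul_assoc, hE, hF, hE2, hF2, k1, k1', k2, k2',
        eq_self_iff_true, true_or, or_true]
  have hmulp : ∀ x y : Matrix (Fin n) (Fin n) ℝ, x ∈ p → y ∈ p → x * y ∈ p := by
    intro x y hx hy
    have hpp : p * p ≤ p := by
      rw [hp, Submodule.span_mul_span]
      apply Submodule.span_le.mpr
      rintro z ⟨a, ha, b, hb, rfl⟩
      exact Submodule.subset_span (hgen a ha b hb)
    exact hpp (Submodule.mul_mem_mul hx hy)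
  have h1s : (1 : Matrix (Fin n) (Fin n) ℝ) ∈ s := by rw [hs]; exact Set.mem_insert _ _
  have hEs : E ∈ s := by
    rw [hs]; exact Set.mem_insert_of_mem _ (Set.mem_insert _ _)
  have hFs : F ∈ s := by
    rw [hs]; exact Set.mem_insert_of_mem _ (Set.mem_insert_of_mem _ (Set.mem_insert _ _))
  have h1p : (1 : Matrix (Fin n) (Fin n) ℝ) ∈ p := Submodule.subset_span h1s
  -- the span, as a subalgebra
  have hle : Subalgebra.toSubmodule (Algebra.adjoin ℝ {E, F}) ≤ p := by
    have hadj : Algebra.adjoin ℝ {E, F} ≤ p.toSubalgebra h1p hmulp := by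
      apply Algebra.adjoin_le
      rintro x (rfl | rfl)
      · exact Submodule.subset_span hEs
      · exact Submodule.subset_span hFs
    exact hadj
  have hge : p ≤ Subalgebra.toSubmodule (Algebra.adjoin ℝ {E, F}) := by
    apply Submodule.span_le.mpr
    have hEa : E ∈ Algebra.adjoin ℝ {E, F} := Algebra.subset_adjoin (Set.mem_insert _ _)
    have hFa : F ∈ Algebra.adjoin ℝ {E, F} :=
      Algebra.subset_adjoin (Set.mem_insert_of_mem _ rfl)
    rintro x hx
    rw [SetLike.mem_coe, Subalgebra.mem_toSubmodule]
    simp only [hs, Set.mem_insert_iff, Set.mem_singleton_iff] at hx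
    rcases hx with rfl|rfl|rfl|rfl|rfl|rfl|rfl|rfl|rfl
    · exact Subalgebra.one_mem _
    · exact hEa
    · exact hFa
    · exact mul_mem hEa hFa
    · exact mul_mem hFa hEa
    · exact mul_mem (mul_mem hEa hFa) hEa
    · exact mul_mem (mul_mem hFa hEa) hFa
    · exact pow_mem (mul_mem hEa hFa) 2
    · exact pow_mem (mul_mem hFa hEa) 2
  have heq : Subalgebra.toSubmodule (Algebra.adjoin ℝ {E, F}) = p := le_antisymm hle hge
  refine ⟨heq, ?_⟩
  -- dimension bound
  have hcard : Module.finrank ℝ p ≤ 9 := by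
    have hsub : s ⊆ Set.range ![1, E, F, E * F, F * E, E * F * E, F * E * F,
        (E * F) ^ 2, (F * E) ^ 2] := by
      intro x hx
      simp only [hs, Set.mem_insert_iff, Set.mem_singleton_iff] at hx
      rcases hx with rfl|rfl|rfl|rfl|rfl|rfl|rfl|rfl|rfl
      · exact ⟨0, rfl⟩
      · exact ⟨1, rfl⟩
      · exact ⟨2, rfl⟩
      · exact ⟨3, rfl⟩
      · exact ⟨4, rfl⟩
      · exact ⟨5, rfl⟩
      · exact ⟨6, rfl⟩
      · exact ⟨7, rfl⟩
      · exact ⟨8, rfl⟩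
    have hmono : p ≤ Submodule.span ℝ (Set.range ![1, E, F, E * F, F * E, E * F * E, F * E * F,
        (E * F) ^ 2, (F * E) ^ 2]) := Submodule.span_mono hsub
    calc Module.finrank ℝ p ≤ Module.finrank ℝ (Submodule.span ℝ (Set.range ![1, E, F, E * F,
          F * E, E * F * E, F * E * F, (E * F) ^ 2, (F * E) ^ 2])) :=
          Submodule.finrank_mono hmono
      _ ≤ Fintype.card (Fin 9) := finrank_range_le_card _
      _ = 9 := by simp
  have hfin : Module.finrank ℝ
      (Subalgebra.toSubmodule (Algebra.adjoin ℝ ({E, F} : Set (Matrix (Fin n) (Fin n) ℝ)))) ≤ 9 := by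
    rw [heq]; exact hcard
  simpa using hfin
end

section
/- Let E be an n×n positive idempotent matrix all of whose columns are nonzero (i.e., Ex = 0 with x ≥ 0 entrywise implies x = 0), and let A be any n×n real matrix with AE ≥ EA entrywise. Then AE = EAE. -/
theorem stmt_3 (n : ℕ) (E A : Matrix (Fin n) (Fin n) ℝ)
    (hE : E * E = E) (hEpos : ∀ i j, 0 ≤ E i j)
    (hnull : ∀ x : Fin n → ℝ, (∀ i, 0 ≤ x i) → E.mulVec x = 0 → x = 0)
    (hcomm : ∀ i j, (E * A) i j ≤ (A * E) i j) :
    A * E = E * A * E := by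
  set M := (A * E - E * A) * E with hM
  have hMeq : M = A * E - E * A * E := by
    rw [hM, Matrix.sub_mul, mul_assoc, hE]
  have hMnn : ∀ i j, 0 ≤ M i j := by
    intro i j
    rw [hM, Matrix.mul_apply]
    apply Finset.sum_nonneg
    intro k _
    have h1 : 0 ≤ (A * E - E * A) i k := by
      simp [sub_nonneg, hcomm i k]
    exact mul_nonneg h1 (hEpos k j)
  have hEM : E * M = 0 := by
    rw [hMeq]
    calc E * (A * E - E * A * E) = E * (A * E) - (E * E) * (A * E) := by noncomm_ring
      _ = 0 := by rw [hE]; noncomm_ring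
  have hMzero : M = 0 := by
    ext i j
    have hcol := hnull (fun k => M k j) (fun k => hMnn k j) ?_
    · exact congrFun hcol i
    · funext i
      have : E.mulVec (fun k => M k j) i = (E * M) i j := by
        simp [Matrix.mulVec, Matrix.mul_apply, dotProduct]
      rw [this, hEM]
      rfl
  have h := hMeq ▸ hMzero
  exact sub_eq_zero.mp h
end

section
/- Let E be a strictly positive n×n idempotent matrix (E ≥ 0 entrywise and E|x| = 0 implies x = 0), and let A be any real n×n matrix with AE ≥ EA entrywise. Then (AE - EA)² = 0. -/
theorem stmt_4 (n : ℕ) (E A : Matrix (Fin n) (Fin n) ℝ)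
    (hE : E * E = E) (hEpos : ∀ i j, 0 ≤ E i j)
    (hstrict : ∀ x : Fin n → ℝ, E.mulVec (fun i => |x i|) = 0 → x = 0)
    (hcomm : ∀ i j, (E * A) i j ≤ (A * E) i j) :
    (A * E - E * A) * (A * E - E * A) = 0 := by
  set C := A * E - E * A with hC
  have hCpos : ∀ i j, 0 ≤ C i j := fun i j => by
    simp only [hC, Matrix.sub_apply, sub_nonneg]
    exact hcomm i j
  -- every column of E has a positive entry
  have hcol : ∀ k, ∃ i, 0 < E i k := by
    intro k
    by_contra h
    push_neg at h
    have hz : ∀ i, E i k = 0 := fun i => le_antisymm (h i) (hEpos i k)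
    have h1 := hstrict (Pi.single k 1) ?_
    · have h2 := congrFun h1 k
      simp at h2
    · funext i
      have habs : (fun j => |(Pi.single k 1 : Fin n → ℝ) j|) = (Pi.single k 1 : Fin n → ℝ) := by
        funext j
        rcases eq_or_ne j k with rfl | hj
        · simp
        · simp [Pi.single_apply, hj]
      rw [habs]
      simp [Matrix.mulVec, dotProduct, Pi.single_apply, mul_ite, hz]
  have hECE : E * C * E = 0 := by
    have h1 : E * C * E = E * A * (E * E) - (E * E) * (A * E) := by
      rw [hC]; noncomm_ring
    rw [h1, hE]
    noncomm_ring
  -- C k l = 0 whenever row l of E is nonzero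
  have hkey : ∀ k l j, 0 < E l j → C k l = 0 := by
    intro k l j hlj
    obtain ⟨i, hik⟩ := hcol k
    have h0 : (E * C * E) i j = 0 := by rw [hECE]; rfl
    have hsum : ∑ l', (E * C) i l' * E l' j = 0 := by
      simpa [Matrix.mul_apply] using h0
    have hECnn : ∀ l', 0 ≤ (E * C) i l' := by
      intro l'
      rw [Matrix.mul_apply]
      exact Finset.sum_nonneg fun k' _ => mul_nonneg (hEpos i k') (hCpos k' l')
    have hterm : (E * C) i l * E l j = 0 :=
      (Finset.sum_eq_zero_iff_of_nonneg (fun l' _ =>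
        mul_nonneg (hECnn l') (hEpos l' j))).mp hsum l (Finset.mem_univ l)
    have hECil : (E * C) i l = 0 := by
      rcases mul_eq_zero.mp hterm with h | h
      · exact h
      · exact absurd h (ne_of_gt hlj)
    have hsum2 : ∑ k', E i k' * C k' l = 0 := by
      simpa [Matrix.mul_apply] using hECil
    have hterm2 : E i k * C k l = 0 :=
      (Finset.sum_eq_zero_iff_of_nonneg (fun k' _ =>
        mul_nonneg (hEpos i k') (hCpos k' l))).mp hsum2 k (Finset.mem_univ k)
    rcases mul_eq_zero.mp hterm2 with h | h
    · exact absurd h (ne_of_gt hik)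
    · exact h
  have hCE : C * E = 0 := by
    ext k j
    rw [Matrix.mul_apply, Matrix.zero_apply]
    apply Finset.sum_eq_zero
    intro l _
    rcases eq_or_lt_of_le (hEpos l j) with h | h
    · rw [← h, mul_zero]
    · rw [hkey k l j h, zero_mul]
  have hCeq : C = E * C := by
    have h1 : C * E + E * C = C := by
      have h2 : (A * E - E * A) * E + E * (A * E - E * A)
          = A * (E * E) - (E * E) * A := by noncomm_ring
      rw [hC, h2, hE]
    rw [hCE, zero_add] at h1
    exact h1.symm
  nth_rewrite 2 [hCeq]
  rw [← mul_assoc, hCE, zero_mul]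
end

section
/- Let E be an n×n positive idempotent matrix whose range ideal is all of ℝⁿ (i.e., for every y there exists x ≥ 0 with |y| ≤ Ex entrywise), and let A be any real n×n matrix with AE ≥ EA entrywise. Then EA = EAE and (AE - EA)² = 0. -/
theorem stmt_6 (n : ℕ) (E A : Matrix (Fin n) (Fin n) ℝ)
    (hE : E * E = E) (hEpos : ∀ i j, 0 ≤ E i j)
    (hrange : ∀ y : Fin n → ℝ, ∃ x : Fin n → ℝ,
      (∀ i, 0 ≤ x i) ∧ ∀ i, |y i| ≤ E.mulVec x i)
    (hcomm : ∀ i j, (E * A) i j ≤ (A * E) i j) :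
    E * A = E * A * E ∧ (A * E - E * A) * (A * E - E * A) = 0 := by
  set D := A * E - E * A with hDdef
  have hD : ∀ k l, 0 ≤ D k l := by
    intro k l
    simp only [hDdef, Matrix.sub_apply]
    linarith [hcomm k l]
  -- E * D * E = 0
  have hEDE : E * D * E = 0 := by
    have h1 : E * D * E = E * A * (E * E) - E * E * (A * E) := by
      rw [hDdef]; noncomm_ring
    rw [hE] at h1
    rw [h1]
    noncomm_ring
  -- entries of E*D are nonneg
  have hEDnn : ∀ i l, 0 ≤ (E * D) i l := by
    intro i l
    rw [Matrix.mul_apply]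
    exact Finset.sum_nonneg fun k _ => mul_nonneg (hEpos i k) (hD k l)
  -- each row of E has a positive entry
  have hpos : ∀ l, ∃ j, 0 < E l j := by
    intro l
    obtain ⟨x, hx, hxy⟩ := hrange (fun _ => (1 : ℝ))
    have h := hxy l
    rw [abs_one] at h
    by_contra hc
    push_neg at hc
    have hz : E.mulVec x l = 0 := by
      rw [Matrix.mulVec, dotProduct]
      apply Finset.sum_eq_zero
      intro j _
      have : E l j = 0 := le_antisymm (hc j) (hEpos l j)
      rw [this, zero_mul]
    linarith
  -- each term (E*D) i l * E l j = 0
  have hterm : ∀ i j l, (E * D) i l * E l j = 0 := by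
    intro i j l
    have hsum : ∑ l, (E * D) i l * E l j = 0 := by
      have := congrFun (congrFun hEDE i) j
      rwa [Matrix.mul_apply, Matrix.zero_apply] at this
    have := (Finset.sum_eq_zero_iff_of_nonneg
      (fun l _ => mul_nonneg (hEDnn i l) (hEpos l j))).mp hsum
    exact this l (Finset.mem_univ l)
  -- E * D = 0
  have hEDz : E * D = 0 := by
    ext i l
    obtain ⟨j, hj⟩ := hpos l
    have := hterm i j l
    rw [Matrix.zero_apply]
    rcases mul_eq_zero.mp this with h | h
    · exact h
    · exact absurd h (ne_of_gt hj)
  -- E*A = E*A*E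
  have hEA : E * A = E * A * E := by
    have h2 : E * A * E - E * E * A = 0 := by
      have h3 : E * D = E * A * E - E * E * A := by rw [hDdef]; noncomm_ring
      rw [← h3]; exact hEDz
    rw [hE] at h2
    exact (sub_eq_zero.mp h2).symm
  refine ⟨hEA, ?_⟩
  have hDE : D * E = D := by
    have h4 : D * E = A * (E * E) - E * A * E := by rw [hDdef]; noncomm_ring
    rw [hE, ← hEA] at h4
    rw [h4]
  calc D * D = (D * E) * D := by rw [hDE]
    _ = D * (E * D) := by noncomm_ring
    _ = 0 := by rw [hEDz, mul_zero]
end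

section
/- Let A and B be positive n×n matrices with AB ≥ BA entrywise. If S = A + B is ideal-irreducible (no nontrivial ideal, i.e., coordinate subspace spanned by a subset of standard basis vectors, is invariant under S), then AB = BA. -/
theorem stmt_7 (n : ℕ) (A B : Matrix (Fin n) (Fin n) ℝ)
    (hApos : ∀ i j, 0 ≤ A i j) (hBpos : ∀ i j, 0 ≤ B i j)
    (hcomm : ∀ i j, (B * A) i j ≤ (A * B) i j)
    (hirr : ∀ s : Finset (Fin n), s.Nonempty → s ≠ Finset.univ →
      ∃ i ∉ s, ∃ j ∈ s, (A + B) i j ≠ 0) :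
    A * B = B * A := by
  classical
  set S : Matrix (Fin n) (Fin n) ℝ := A + B with hS
  set C : Matrix (Fin n) (Fin n) ℝ := A * B - B * A with hC
  -- C ≥ 0 entrywise
  have hCnn : ∀ i j, 0 ≤ C i j := by
    intro i j
    simp only [hC, Matrix.sub_apply, sub_nonneg]
    exact hcomm i j
  have hSnn : ∀ i j, 0 ≤ S i j := by
    intro i j; simp only [hS, Matrix.add_apply]; exact add_nonneg (hApos i j) (hBpos i j)
  -- powers of S are nonnegative
  have hpow : ∀ k : ℕ, ∀ i j, 0 ≤ (S ^ k) i j := by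
    intro k
    induction k with
    | zero =>
      intro i j
      simp only [pow_zero, Matrix.one_apply]
      split <;> norm_num
    | succ m ih =>
      intro i j
      rw [pow_succ', Matrix.mul_apply]
      exact Finset.sum_nonneg fun m' _ => mul_nonneg (hSnn i m') (ih m' j)
  -- reachability: every entry of some power of S is positive
  have hreach : ∀ p q : Fin n, ∃ k : ℕ, 0 < (S ^ k) p q := by
    intro p q
    by_contra hcon
    push_neg at hcon
    set s : Finset (Fin n) := Finset.univ.filter (fun i => ∃ k : ℕ, 0 < (S ^ k) i q) with hs
    have hq : q ∈ s := by
      simp only [hs, Finset.mem_filter, Finset.mem_univ, true_and]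
      exact ⟨0, by simp [Matrix.one_apply]⟩
    have hne : s ≠ Finset.univ := by
      intro h
      have hp : p ∈ s := h ▸ Finset.mem_univ p
      simp only [hs, Finset.mem_filter, Finset.mem_univ, true_and] at hp
      obtain ⟨k, hk⟩ := hp
      exact absurd hk (not_lt.mpr (hcon k))
    obtain ⟨i, hi, j, hj, hij⟩ := hirr s ⟨q, hq⟩ hne
    simp only [hs, Finset.mem_filter, Finset.mem_univ, true_and] at hj
    obtain ⟨k, hk⟩ := hj
    have hSij : 0 < S i j := lt_of_le_of_ne (hSnn i j) (Ne.symm hij)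
    have : 0 < (S ^ (k + 1)) i q := by
      rw [pow_succ', Matrix.mul_apply]
      have hterm : 0 < S i j * (S ^ k) j q := mul_pos hSij hk
      calc (0 : ℝ) < S i j * (S ^ k) j q := hterm
        _ ≤ ∑ m, S i m * (S ^ k) m q :=
          Finset.single_le_sum (f := fun m => S i m * (S ^ k) m q)
            (fun m _ => mul_nonneg (hSnn i m) (hpow k m q)) (Finset.mem_univ j)
    apply hi
    simp only [hs, Finset.mem_filter, Finset.mem_univ, true_and]
    exact ⟨k + 1, this⟩
  -- C = A*S - S*A
  have hCAS : C = A * S - S * A := by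
    simp only [hC, hS, Matrix.mul_add, Matrix.add_mul]
    abel
  -- trace (S^k * C) = 0
  have htr : ∀ k : ℕ, Matrix.trace (S ^ k * C) = 0 := by
    intro k
    rw [hCAS, Matrix.mul_sub, Matrix.trace_sub, ← Matrix.mul_assoc,
      Matrix.trace_mul_comm (S ^ k * A) S, ← Matrix.mul_assoc]
    rw [← Matrix.mul_assoc, ← pow_succ', ← pow_succ, sub_self]
  -- each term of the trace is zero
  have hterm : ∀ (k : ℕ) (i j : Fin n), (S ^ k) i j * C j i = 0 := by
    intro k i j
    have h0 := htr k
    rw [Matrix.trace] at h0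
    have hdiag : ∀ i : Fin n, (S ^ k * C) i i = 0 := by
      intro i'
      have := (Finset.sum_eq_zero_iff_of_nonneg (fun i'' _ => by
        rw [Matrix.diag_apply, Matrix.mul_apply]
        exact Finset.sum_nonneg fun m _ => mul_nonneg (hpow k i'' m) (hCnn m i''))).mp h0
      exact this i' (Finset.mem_univ i')
    have h1 := hdiag i
    rw [Matrix.mul_apply] at h1
    have := (Finset.sum_eq_zero_iff_of_nonneg (fun m _ =>
      mul_nonneg (hpow k i m) (hCnn m i))).mp h1
    exact this j (Finset.mem_univ j)
  have hCzero : ∀ i j, C i j = 0 := by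
    intro i j
    obtain ⟨k, hk⟩ := hreach j i
    have := hterm k j i
    rcases mul_eq_zero.mp this with h | h
    · exact absurd h (ne_of_gt hk)
    · exact h
  have : C = 0 := by ext i j; exact hCzero i j
  have := sub_eq_zero.mp (hC ▸ this)
  exact this
end

section
/- Let A be the diagonal n×n matrix with strictly decreasing positive diagonal entries, and let J be the nilpotent upper-triangular Jordan block (J e_i = e_{i-1}, J e_1 = 0). Then the unital algebra generated by A and J equals the algebra of all upper triangular n×n matrices; in particular its dimension is n(n+1)/2. -/
/-!
Since the `a i` are distinct, evaluating Lagrange basis polynomials at `diagonal a` yields every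
diagonal matrix unit `E i i`. The superdiagonal `J` then moves one step to the right,
`E i j * J * E (j+1) (j+1) = E i (j+1)`, so the algebra contains every `E i j` with `i ≤ j`, hence
all upper triangular matrices; conversely both generators are upper triangular.
-/

open Matrix Polynomial

theorem Fintype.card_subtype_fst_le_snd {α : Type*} [Fintype α] [LinearOrder α] :
    Fintype.card {p : α × α // p.1 ≤ p.2} = Fintype.card α * (Fintype.card α + 1) / 2 := by
  rw [← Fintype.card_congr Sym2.sortEquiv, Sym2.card, Nat.choose_two_right, Nat.add_sub_cancel,
    Nat.mul_comm]

namespace Matrix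

theorem aeval_diagonal {R A m : Type*} [CommSemiring R] [CommSemiring A] [Algebra R A]
    [Fintype m] [DecidableEq m] (d : m → A) (p : R[X]) :
    aeval (diagonal d) p = diagonal fun i => aeval (d i) p := by
  rw [← diagonalAlgHom_apply (R := R), aeval_algHom_apply, aeval_pi_apply, diagonalAlgHom_apply]

theorem single_one_mem_adjoin_diagonal {K m : Type*} [Field K] [Fintype m] [DecidableEq m]
    {d : m → K} (hd : Function.Injective d) (i : m) :
    single i i (1 : K) ∈ Algebra.adjoin K {diagonal d} := by
  have hL : aeval (diagonal d) (Lagrange.basis Finset.univ d i) = single i i 1 := by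
    rw [aeval_diagonal, ← diagonal_single]
    congr 1
    ext j
    rw [coe_aeval_eq_eval]
    rcases eq_or_ne i j with rfl | hij
    · rw [Pi.single_eq_same, Lagrange.eval_basis_self hd.injOn (Finset.mem_univ i)]
    · rw [Pi.single_eq_of_ne' hij, Lagrange.eval_basis_of_ne hij (Finset.mem_univ j)]
  exact hL ▸ aeval_mem_adjoin_singleton K _

theorem single_one_mem_of_superdiagonal {R : Type*} [CommSemiring R] {n : ℕ}
    {S : Subalgebra R (Matrix (Fin n) (Fin n) R)} (hdiag : ∀ i, single i i (1 : R) ∈ S)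
    {J : Matrix (Fin n) (Fin n) R} (hJS : J ∈ S)
    (hJ : ∀ i j : Fin n, (i : ℕ) + 1 = j → J i j = 1)
    {i j : Fin n} (hij : i ≤ j) : single i j (1 : R) ∈ S := by
  obtain ⟨k, hk⟩ := Nat.exists_eq_add_of_le (Fin.le_def.mp hij)
  induction k generalizing j with
  | zero =>
    obtain rfl : j = i := Fin.ext hk
    exact hdiag j
  | succ k ih =>
    set j' : Fin n := ⟨i + k, by omega⟩
    have hj' : single i j' (1 : R) ∈ S := ih (Fin.le_def.mpr (Nat.le_add_right _ _)) rfl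
    have : single i j' (1 : R) * J * single j j 1 = single i j 1 := by
      rw [single_mul_mul_single, hJ j' j (by simp [j']; omega), one_mul, one_mul]
    exact this ▸ mul_mem (mul_mem hj' hJS) (hdiag j)

theorem blockTriangularSubalgebra_le {R m α : Type*} [CommSemiring R] [Fintype m] [DecidableEq m]
    [LinearOrder α] {b : m → α} {S : Subalgebra R (Matrix m m R)}
    (h : ∀ i j, ¬ b j < b i → single i j (1 : R) ∈ S) :
    blockTriangularSubalgebra R R b ≤ S := by
  intro M hM
  rw [matrix_eq_sum_single M]
  refine Subalgebra.sum_mem _ fun i _ => Subalgebra.sum_mem _ fun j _ => ?_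
  by_cases hij : b j < b i
  · rw [hM hij, single_zero]
    exact S.zero_mem
  · rw [← mul_one (M i j), ← smul_eq_mul, ← smul_single]
    exact S.smul_mem (h i j hij) _

def upperTriangularEquiv (R m : Type*) [CommSemiring R] [Fintype m] [DecidableEq m]
    [LinearOrder m] :
    blockTriangularSubalgebra R R (id : m → m) ≃ₗ[R] ({p : m × m // p.1 ≤ p.2} → R) where
  toFun M p := (M : Matrix m m R) p.1.1 p.1.2
  invFun f := ⟨of fun i j => if h : i ≤ j then f ⟨(i, j), h⟩ else 0,
    fun _ _ hij => dif_neg (not_le.mpr hij)⟩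
  map_add' _ _ := rfl
  map_smul' _ _ := rfl
  left_inv M := by
    ext i j
    by_cases hij : i ≤ j
    · exact dif_pos hij
    · exact ((dif_neg hij).trans (M.2 (not_le.mp hij)).symm)
  right_inv f := funext fun p => dif_pos p.2

theorem finrank_upperTriangular (K : Type*) [Field K] (n : ℕ) :
    Module.finrank K (blockTriangularSubalgebra K K (id : Fin n → Fin n)) = n * (n + 1) / 2 := by
  rw [(upperTriangularEquiv K (Fin n)).finrank_eq, Module.finrank_fintype_fun_eq_card,
    Fintype.card_subtype_fst_le_snd, Fintype.card_fin]

theorem adjoin_diagonal_superdiagonal_eq_blockTriangularSubalgebra {K : Type*} [Field K] {n : ℕ}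
    {d : Fin n → K} (hd : Function.Injective d) {J : Matrix (Fin n) (Fin n) K}
    (hJ : ∀ i j, J i j = if (i : ℕ) + 1 = (j : ℕ) then 1 else 0) :
    Algebra.adjoin K {diagonal d, J} = blockTriangularSubalgebra K K id := by
  refine le_antisymm (Algebra.adjoin_le ?_) (blockTriangularSubalgebra_le fun i j hij => ?_)
  · rintro M (rfl | rfl)
    · exact blockTriangular_diagonal d
    · intro i j hij
      rw [hJ, if_neg (by simp only [id, Fin.lt_def] at hij; omega)]
  · have hdiag (k : Fin n) : single k k (1 : K) ∈ Algebra.adjoin K {diagonal d, J} :=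
      Algebra.adjoin_mono (Set.singleton_subset_iff.mpr (Set.mem_insert _ _))
        (single_one_mem_adjoin_diagonal hd k)
    exact single_one_mem_of_superdiagonal hdiag
      (Algebra.subset_adjoin (Set.mem_insert_of_mem _ rfl)) (fun i j h => by rw [hJ, if_pos h])
      (not_lt.mp hij)

end Matrix

theorem stmt_8_general (n : ℕ) (a : Fin n → ℝ) (hdec : StrictAnti a)
    (J : Matrix (Fin n) (Fin n) ℝ)
    (hJ : ∀ i j, J i j = if (i : ℕ) + 1 = (j : ℕ) then 1 else 0) :
    ((Algebra.adjoin ℝ {Matrix.diagonal a, J} :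
        Subalgebra ℝ (Matrix (Fin n) (Fin n) ℝ)) : Set (Matrix (Fin n) (Fin n) ℝ)) =
      {M : Matrix (Fin n) (Fin n) ℝ | ∀ i j, j < i → M i j = 0} ∧
    Module.finrank ℝ
      (Algebra.adjoin ℝ {Matrix.diagonal a, J} :
        Subalgebra ℝ (Matrix (Fin n) (Fin n) ℝ)) = n * (n + 1) / 2 := by
  rw [adjoin_diagonal_superdiagonal_eq_blockTriangularSubalgebra hdec.injective hJ]
  exact ⟨Set.ext fun _ => ⟨fun h i j hij => h hij, fun h _ _ hij => h _ _ hij⟩,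
    finrank_upperTriangular ℝ n⟩

theorem stmt_8 (n : ℕ) (a : Fin n → ℝ) (hpos : ∀ i, 0 < a i) (hdec : StrictAnti a)
    (J : Matrix (Fin n) (Fin n) ℝ)
    (hJ : ∀ i j, J i j = if (i : ℕ) + 1 = (j : ℕ) then 1 else 0) :
    ((Algebra.adjoin ℝ {Matrix.diagonal a, J} :
        Subalgebra ℝ (Matrix (Fin n) (Fin n) ℝ)) : Set (Matrix (Fin n) (Fin n) ℝ)) =
      {M : Matrix (Fin n) (Fin n) ℝ | ∀ i j, j < i → M i j = 0} ∧
    Module.finrank ℝ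
      (Algebra.adjoin ℝ {Matrix.diagonal a, J} :
        Subalgebra ℝ (Matrix (Fin n) (Fin n) ℝ)) = n * (n + 1) / 2 :=
  stmt_8_general n a hdec J hJ
end

section
/- Let A be a positive diagonal n×n matrix with distinct diagonal entries. Then the linear span of the super left-commutant ⟨A] = {B : B ≥ 0 entrywise, AB ≥ BA entrywise} has dimension exactly n(n+1)/2. -/
/-!
A matrix `B ≥ 0` with `B * diagonal a ≤ diagonal a * B` has `B i j * (a i - a j) ≥ 0`, so
`B i j = 0` whenever `a i < a j`; conversely every matrix unit `E i j` with `a j ≤ a i` lies in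
the super left-commutant. Its span is therefore spanned by these matrix units, and for injective
`a` the pairs `(i, j)` with `a j ≤ a i` are exactly the sorted representatives of unordered pairs,
of which there are `n * (n + 1) / 2`.
-/

open Matrix Module

theorem Fintype.card_subtype_comp_le_of_injective {ι α : Type*} [Fintype ι] [LinearOrder α]
    {a : ι → α} (ha : Function.Injective a) :
    Fintype.card {p : ι × ι // a p.2 ≤ a p.1} = Fintype.card ι * (Fintype.card ι + 1) / 2 := by
  let : LinearOrder ι := LinearOrder.lift' a ha
  calc Fintype.card {p : ι × ι // a p.2 ≤ a p.1}
      = Fintype.card {p : ι × ι // p.1 ≤ p.2} :=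
        Fintype.card_congr ((Equiv.prodComm ι ι).subtypeEquiv fun _ => Iff.rfl)
    _ = Fintype.card (Sym2 ι) := Fintype.card_congr Sym2.sortEquiv.symm
    _ = Fintype.card ι * (Fintype.card ι + 1) / 2 := by
        rw [Sym2.card, Nat.choose_two_right, Nat.add_sub_cancel, mul_comm]

namespace Matrix

variable {ι R : Type*} [Fintype ι] [DecidableEq ι]
  [CommRing R] [LinearOrder R] [IsStrictOrderedRing R]

def superLeftCommutant (a : ι → R) : Set (Matrix ι ι R) :=
  {B | (∀ i j, 0 ≤ B i j) ∧ ∀ i j, (B * diagonal a) i j ≤ (diagonal a * B) i j}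

variable {a : ι → R}

theorem single_one_mem_superLeftCommutant {i j : ι} (h : a j ≤ a i) :
    single i j (1 : R) ∈ superLeftCommutant a := by
  refine ⟨fun i' j' => ?_, fun i' j' => ?_⟩
  · by_cases hij : i = i' ∧ j = j' <;> simp [hij]
  · rw [mul_diagonal, diagonal_mul]
    by_cases hij : i = i' ∧ j = j'
    · obtain ⟨rfl, rfl⟩ := hij
      simpa using h
    · simp [hij]

theorem apply_eq_zero_of_mem_superLeftCommutant {B : Matrix ι ι R}
    (hB : B ∈ superLeftCommutant a) {i j : ι} (h : a i < a j) : B i j = 0 := by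
  have hle := hB.2 i j
  rw [mul_diagonal, diagonal_mul] at hle
  nlinarith [hB.1 i j]

theorem span_superLeftCommutant (a : ι → R) :
    Submodule.span R (superLeftCommutant a) =
      Submodule.span R
        (Set.range fun p : {p : ι × ι // a p.2 ≤ a p.1} => single p.1.1 p.1.2 (1 : R)) := by
  apply le_antisymm
  · rw [Submodule.span_le]
    intro B hB
    rw [matrix_eq_sum_single B]
    refine Submodule.sum_mem _ fun i _ => Submodule.sum_mem _ fun j _ => ?_
    rcases le_or_gt (a j) (a i) with hij | hij
    · rw [← mul_one (B i j), ← smul_eq_mul, ← smul_single]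
      exact Submodule.smul_mem _ _ (Submodule.subset_span ⟨⟨(i, j), hij⟩, rfl⟩)
    · rw [apply_eq_zero_of_mem_superLeftCommutant hB hij, single_zero]
      exact Submodule.zero_mem _
  · rw [Submodule.span_le]
    rintro _ ⟨p, rfl⟩
    exact Submodule.subset_span (single_one_mem_superLeftCommutant p.2)

theorem finrank_span_superLeftCommutant (ha : Function.Injective a) :
    finrank R (Submodule.span R (superLeftCommutant a)) =
      Fintype.card ι * (Fintype.card ι + 1) / 2 := by
  have hli : LinearIndependent R
      fun p : {p : ι × ι // a p.2 ≤ a p.1} => single p.1.1 p.1.2 (1 : R) := by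
    have hfam : (fun p : {p : ι × ι // a p.2 ≤ a p.1} => single p.1.1 p.1.2 (1 : R)) =
        stdBasis R ι ι ∘ Subtype.val :=
      funext fun p => (stdBasis_eq_single R p.1.1 p.1.2).symm
    rw [hfam]
    exact (stdBasis R ι ι).linearIndependent.comp _ Subtype.val_injective
  rw [span_superLeftCommutant, finrank_span_eq_card hli,
    Fintype.card_subtype_comp_le_of_injective ha]

end Matrix

theorem stmt_10_general (n : ℕ) (a : Fin n → ℝ)
    (hdist : Function.Injective a) :
    Module.finrank ℝ (Submodule.span ℝ
      {B : Matrix (Fin n) (Fin n) ℝ | (∀ i j, 0 ≤ B i j) ∧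
        ∀ i j, (B * Matrix.diagonal a) i j ≤ (Matrix.diagonal a * B) i j}) =
      n * (n + 1) / 2 := by
  have h := Matrix.finrank_span_superLeftCommutant hdist
  rwa [Fintype.card_fin] at h

theorem stmt_10 (n : ℕ) (a : Fin n → ℝ) (hpos : ∀ i, 0 ≤ a i)
    (hdist : Function.Injective a) :
    Module.finrank ℝ (Submodule.span ℝ
      {B : Matrix (Fin n) (Fin n) ℝ | (∀ i j, 0 ≤ B i j) ∧
        ∀ i j, (B * Matrix.diagonal a) i j ≤ (Matrix.diagonal a * B) i j}) =
      n * (n + 1) / 2 :=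
  stmt_10_general n a hdist
end

section
/- The super left-commutant ⟨A] = {B : B ≥ 0 entrywise, AB ≥ BA entrywise} of a positive n×n matrix A is closed under addition and multiplication. -/
theorem stmt_11 (n : ℕ) (A : Matrix (Fin n) (Fin n) ℝ) (hApos : ∀ i j, 0 ≤ A i j)
    (B C : Matrix (Fin n) (Fin n) ℝ)
    (hBpos : ∀ i j, 0 ≤ B i j) (hCpos : ∀ i j, 0 ≤ C i j)
    (hB : ∀ i j, (B * A) i j ≤ (A * B) i j)
    (hC : ∀ i j, (C * A) i j ≤ (A * C) i j) :
    ((∀ i j, 0 ≤ (B + C) i j) ∧ ∀ i j, ((B + C) * A) i j ≤ (A * (B + C)) i j) ∧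
    ((∀ i j, 0 ≤ (B * C) i j) ∧ ∀ i j, ((B * C) * A) i j ≤ (A * (B * C)) i j) := by
  refine ⟨⟨?_, ?_⟩, ?_, ?_⟩
  · intro i j
    simpa [Matrix.add_apply] using add_nonneg (hBpos i j) (hCpos i j)
  · intro i j
    simp only [Matrix.add_mul, Matrix.mul_add, Matrix.add_apply]
    exact add_le_add (hB i j) (hC i j)
  · intro i j
    rw [Matrix.mul_apply]
    exact Finset.sum_nonneg fun k _ => mul_nonneg (hBpos i k) (hCpos k j)
  · intro i j
    calc (B * C * A) i j = (B * (C * A)) i j := by rw [mul_assoc]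
      _ ≤ (B * (A * C)) i j := by
          simp only [Matrix.mul_apply]
          exact Finset.sum_le_sum fun k _ =>
            mul_le_mul_of_nonneg_left (hC k j) (hBpos i k)
      _ = ((B * A) * C) i j := by rw [mul_assoc]
      _ ≤ ((A * B) * C) i j := by
          simp only [Matrix.mul_apply]
          exact Finset.sum_le_sum fun k _ =>
            mul_le_mul_of_nonneg_right (hB i k) (hCpos k j)
      _ = (A * (B * C)) i j := by rw [mul_assoc]
end

section
/- For k ≥ 2, let E = [[I, 2I],[0, 0]] and F = [[I, 0],[P, 0]] be 2k×2k block matrices, where I is the k×k identity and P is the k×k cyclic permutation matrix. Then E and F are positive idempotents, and the 4k matrices C^{2j}, C^{2j+1}, C^{2j}E, C^{2j+1}E for j = 1,...,k, where C = E - F, are linearly independent. -/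
open Matrix

lemma aux_mod_cancel {k x y : ℕ} (m : ℕ) (hx : x < k) (hy : y < k)
    (h : (x + m) % k = (y + m) % k) : x = y := by
  have h2 : x % k = y % k := Nat.ModEq.add_right_cancel' m h
  rwa [Nat.mod_eq_of_lt hx, Nat.mod_eq_of_lt hy] at h2

lemma aux_succ_mod_ne {k a : ℕ} (hk : 2 ≤ k) (ha : a < k) : (a + 1) % k ≠ a := by
  rcases Nat.lt_or_ge (a + 1) k with h | h
  · rw [Nat.mod_eq_of_lt h]; omega
  · have : a + 1 = k := by omega
    rw [this, Nat.mod_self]; omega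

lemma aux_Ppow {k : ℕ} (hk : 0 < k) (P : Matrix (Fin k) (Fin k) ℝ)
    (hP : ∀ i j, P i j = if (i : ℕ) = ((j : ℕ) + 1) % k then 1 else 0) :
    ∀ (m : ℕ) (i j : Fin k),
      (P ^ m) i j = if (i : ℕ) = ((j : ℕ) + m) % k then 1 else 0 := by
  intro m
  induction m with
  | zero =>
    intro i j
    simp [Matrix.one_apply, Fin.ext_iff, Nat.mod_eq_of_lt j.isLt]
  | succ m ih =>
    intro i j
    rw [pow_succ, Matrix.mul_apply]
    have hl0 : ((j : ℕ) + 1) % k < k := Nat.mod_lt _ hk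
    rw [Finset.sum_eq_single (⟨((j : ℕ) + 1) % k, hl0⟩ : Fin k)]
    · rw [ih, hP]
      simp only [Nat.mod_add_mod]
      have : (j : ℕ) + 1 + m = (j : ℕ) + (m + 1) := by omega
      rw [this]
      simp
    · intro b _ hb
      rw [hP]
      have : ¬ ((b : ℕ) = ((j : ℕ) + 1) % k) := fun hc => hb (Fin.ext hc)
      rw [if_neg this, mul_zero]
    · intro h; exact absurd (Finset.mem_univ _) h

lemma aux_diag_pow {k : ℕ} (Q : Matrix (Fin k) (Fin k) ℝ) (m : ℕ) :
    (fromBlocks Q 0 0 Q) ^ m = fromBlocks (Q ^ m) 0 0 (Q ^ m) := by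
  induction m with
  | zero => simp [← Matrix.fromBlocks_one]
  | succ m ih => rw [pow_succ, ih, fromBlocks_multiply, pow_succ]; simp

theorem stmt_16 (k : ℕ) (hk : 2 ≤ k)
    (P : Matrix (Fin k) (Fin k) ℝ)
    (hP : ∀ i j, P i j = if (i : ℕ) = ((j : ℕ) + 1) % k then 1 else 0)
    (E F : Matrix (Fin (k + k)) (Fin (k + k)) ℝ)
    (hE : E = Matrix.reindex finSumFinEquiv finSumFinEquiv
      (Matrix.fromBlocks (1 : Matrix (Fin k) (Fin k) ℝ) ((2 : ℝ) • 1) 0 0))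
    (hF : F = Matrix.reindex finSumFinEquiv finSumFinEquiv
      (Matrix.fromBlocks (1 : Matrix (Fin k) (Fin k) ℝ) 0 P 0)) :
    E * E = E ∧ F * F = F ∧ (∀ i j, 0 ≤ E i j) ∧ (∀ i j, 0 ≤ F i j) ∧
    LinearIndependent ℝ (fun p : Fin k × Fin 4 =>
      let C := E - F
      let j := (p.1 : ℕ) + 1
      if p.2 = 0 then C ^ (2 * j)
      else if p.2 = 1 then C ^ (2 * j + 1)
      else if p.2 = 2 then C ^ (2 * j) * E
      else C ^ (2 * j + 1) * E) := by
  have hk0 : 0 < k := by omega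
  set A := Matrix.reindexAlgEquiv ℝ ℝ (finSumFinEquiv (n := k) (m := k)) with hA
  have hAap : ∀ M, A M = Matrix.reindex finSumFinEquiv finSumFinEquiv M :=
    fun M => Matrix.reindexAlgEquiv_apply ℝ ℝ _ M
  refine ⟨?_, ?_, ?_, ?_, ?_⟩
  · -- E * E = E
    rw [hE, ← hAap, ← _root_.map_mul]
    congr 1
    rw [fromBlocks_multiply]
    simp
  · -- F * F = F
    rw [hF, ← hAap, ← _root_.map_mul]
    congr 1
    rw [fromBlocks_multiply]
    simp
  · -- 0 ≤ E
    intro i j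
    rw [hE, Matrix.reindex_apply, Matrix.submatrix_apply]
    rcases finSumFinEquiv.symm i with a | a <;> rcases finSumFinEquiv.symm j with b | b <;>
      simp [Matrix.one_apply, Matrix.smul_apply] <;> split <;> norm_num
  · -- 0 ≤ F
    intro i j
    rw [hF, Matrix.reindex_apply, Matrix.submatrix_apply]
    rcases finSumFinEquiv.symm i with a | a <;> rcases finSumFinEquiv.symm j with b | b <;>
      simp [Matrix.one_apply, hP] <;> split <;> norm_num
  -- linear independence
  have hC : E - F = A (fromBlocks 0 ((2 : ℝ) • 1) (-P) 0) := by
    rw [hE, hF, ← hAap, ← hAap, ← map_sub]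
    congr 1
    ext (i | i) (j | j) <;> simp [fromBlocks]
  have hC2 : (E - F) ^ 2 = A ((-2 : ℝ) • fromBlocks P 0 0 P) := by
    rw [sq, hC, ← _root_.map_mul]
    congr 1
    rw [fromBlocks_multiply, fromBlocks_smul]
    simp [smul_mul_assoc, mul_smul_comm]
  have h0 : ∀ m : ℕ, (E - F) ^ (2 * m) =
      A ((-2 : ℝ) ^ m • fromBlocks (P ^ m) 0 0 (P ^ m)) := by
    intro m
    rw [pow_mul, hC2, ← _root_.map_pow, smul_pow, aux_diag_pow]
  have h1 : ∀ m : ℕ, (E - F) ^ (2 * m + 1) =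
      A ((-2 : ℝ) ^ m • fromBlocks 0 ((2 : ℝ) • P ^ m) (-(P ^ (m + 1))) 0) := by
    intro m
    rw [pow_succ, h0, hC, ← _root_.map_mul]
    congr 1
    rw [smul_mul_assoc, fromBlocks_multiply]
    congr 1 <;> simp [mul_smul_comm, pow_succ]
  have h2 : ∀ m : ℕ, (E - F) ^ (2 * m) * E =
      A ((-2 : ℝ) ^ m • fromBlocks (P ^ m) ((2 : ℝ) • P ^ m) 0 0) := by
    intro m
    rw [h0, hE, ← hAap, ← _root_.map_mul]
    congr 1
    rw [smul_mul_assoc, fromBlocks_multiply]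
    congr 1 <;> simp [mul_smul_comm]
  have h3 : ∀ m : ℕ, (E - F) ^ (2 * m + 1) * E =
      A ((-2 : ℝ) ^ m • fromBlocks 0 0 (-(P ^ (m + 1))) ((-2 : ℝ) • P ^ (m + 1))) := by
    intro m
    rw [h1, hE, ← hAap, ← _root_.map_mul]
    congr 1
    rw [smul_mul_assoc, fromBlocks_multiply]
    congr 1 <;> simp [mul_smul_comm]
  have hPp := aux_Ppow hk0 P hP
  rw [Fintype.linearIndependent_iff]
  intro g hg
  rw [Fintype.sum_prod_type] at hg
  simp only [Fin.sum_univ_four, Fin.isValue, Fin.reduceEq, reduceIte, if_true] at hg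
  simp only [h2, h3] at hg
  simp only [h0, h1] at hg
  -- key equation 1 : top-left block
  have key1 : ∀ j0 : Fin k, g (j0, 0) + g (j0, 2) = 0 := by
    intro j0
    have hr : ((j0 : ℕ) + 1) % k < k := Nat.mod_lt _ hk0
    have e1 := congrArg (fun M => M (finSumFinEquiv (Sum.inl (⟨((j0 : ℕ) + 1) % k, hr⟩ : Fin k)))
      (finSumFinEquiv (Sum.inl (⟨0, hk0⟩ : Fin k)))) hg
    simp only [Matrix.sum_apply, Matrix.add_apply, Matrix.smul_apply, hAap,
      Matrix.reindex_apply, Matrix.submatrix_apply, Equiv.symm_apply_apply,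
      fromBlocks_apply₁₁, Matrix.zero_apply, Matrix.neg_apply, smul_eq_mul,
      mul_zero, add_zero, zero_add, mul_one, hPp] at e1
    have hterm : ∀ x : Fin k,
        g (x, 0) * ((-2 : ℝ) ^ ((x : ℕ) + 1) *
            if ((j0 : ℕ) + 1) % k = ((x : ℕ) + 1) % k then 1 else 0) +
        g (x, 2) * ((-2 : ℝ) ^ ((x : ℕ) + 1) *
            if ((j0 : ℕ) + 1) % k = ((x : ℕ) + 1) % k then 1 else 0) =
        if x = j0 then (-2 : ℝ) ^ ((j0 : ℕ) + 1) * (g (j0, 0) + g (j0, 2)) else 0 := by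
      intro x
      by_cases hx : x = j0
      · subst hx
        rw [if_pos rfl, if_pos rfl]
        ring
      · have hcond : ¬ (((j0 : ℕ) + 1) % k = ((x : ℕ) + 1) % k) :=
          fun hc => hx (Fin.ext (aux_mod_cancel 1 j0.isLt x.isLt hc)).symm
        rw [if_neg hcond, if_neg hx]
        ring
    have hsum := Finset.sum_congr rfl (fun x (_ : x ∈ Finset.univ) => hterm x)
    rw [hsum, Finset.sum_ite_eq'] at e1
    simp only [Finset.mem_univ, if_true] at e1
    have hc2 : ((-2 : ℝ)) ^ ((j0 : ℕ) + 1) ≠ 0 := pow_ne_zero _ (by norm_num)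
    exact (mul_eq_zero.mp e1).resolve_left hc2
  -- key equation 2 : top-right block
  have key2 : ∀ j0 : Fin k, g (j0, 1) + g (j0, 2) = 0 := by
    intro j0
    have hr : ((j0 : ℕ) + 1) % k < k := Nat.mod_lt _ hk0
    have e2 := congrArg (fun M => M (finSumFinEquiv (Sum.inl (⟨((j0 : ℕ) + 1) % k, hr⟩ : Fin k)))
      (finSumFinEquiv (Sum.inr (⟨0, hk0⟩ : Fin k)))) hg
    simp only [Matrix.sum_apply, Matrix.add_apply, Matrix.smul_apply, hAap,
      Matrix.reindex_apply, Matrix.submatrix_apply, Equiv.symm_apply_apply,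
      fromBlocks_apply₁₂, Matrix.zero_apply, Matrix.neg_apply, smul_eq_mul,
      mul_zero, add_zero, zero_add, mul_one, hPp] at e2
    have hterm : ∀ x : Fin k,
        g (x, 1) * ((-2 : ℝ) ^ ((x : ℕ) + 1) *
            (2 * if ((j0 : ℕ) + 1) % k = ((x : ℕ) + 1) % k then 1 else 0)) +
        g (x, 2) * ((-2 : ℝ) ^ ((x : ℕ) + 1) *
            (2 * if ((j0 : ℕ) + 1) % k = ((x : ℕ) + 1) % k then 1 else 0)) =
        if x = j0 then (-2 : ℝ) ^ ((j0 : ℕ) + 1) * 2 * (g (j0, 1) + g (j0, 2)) else 0 := by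
      intro x
      by_cases hx : x = j0
      · subst hx
        rw [if_pos rfl, if_pos rfl]
        ring
      · have hcond : ¬ (((j0 : ℕ) + 1) % k = ((x : ℕ) + 1) % k) :=
          fun hc => hx (Fin.ext (aux_mod_cancel 1 j0.isLt x.isLt hc)).symm
        rw [if_neg hcond, if_neg hx]
        ring
    have hsum := Finset.sum_congr rfl (fun x (_ : x ∈ Finset.univ) => hterm x)
    rw [hsum, Finset.sum_ite_eq'] at e2
    simp only [Finset.mem_univ, if_true] at e2
    have hc2 : ((-2 : ℝ)) ^ ((j0 : ℕ) + 1) * 2 ≠ 0 :=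
      mul_ne_zero (pow_ne_zero _ (by norm_num)) (by norm_num)
    exact (mul_eq_zero.mp e2).resolve_left hc2
  -- key equation 3 : bottom-left block
  have key3 : ∀ j0 : Fin k, g (j0, 1) + g (j0, 3) = 0 := by
    intro j0
    have hr : ((j0 : ℕ) + 2) % k < k := Nat.mod_lt _ hk0
    have e3 := congrArg (fun M => M (finSumFinEquiv (Sum.inr (⟨((j0 : ℕ) + 2) % k, hr⟩ : Fin k)))
      (finSumFinEquiv (Sum.inl (⟨0, hk0⟩ : Fin k)))) hg
    simp only [Matrix.sum_apply, Matrix.add_apply, Matrix.smul_apply, hAap,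
      Matrix.reindex_apply, Matrix.submatrix_apply, Equiv.symm_apply_apply,
      fromBlocks_apply₂₁, Matrix.zero_apply, Matrix.neg_apply, smul_eq_mul,
      mul_zero, add_zero, zero_add, mul_one, hPp] at e3
    have hterm : ∀ x : Fin k,
        g (x, 1) * ((-2 : ℝ) ^ ((x : ℕ) + 1) *
            -if ((j0 : ℕ) + 2) % k = ((x : ℕ) + 1 + 1) % k then 1 else 0) +
        g (x, 3) * ((-2 : ℝ) ^ ((x : ℕ) + 1) *
            -if ((j0 : ℕ) + 2) % k = ((x : ℕ) + 1 + 1) % k then 1 else 0) =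
        if x = j0 then (-2 : ℝ) ^ ((j0 : ℕ) + 1) * (-(g (j0, 1) + g (j0, 3))) else 0 := by
      intro x
      by_cases hx : x = j0
      · subst hx
        rw [if_pos rfl, if_pos rfl]
        ring
      · have hcond : ¬ (((j0 : ℕ) + 2) % k = ((x : ℕ) + 1 + 1) % k) :=
          fun hc => hx (Fin.ext (aux_mod_cancel 2 j0.isLt x.isLt hc)).symm
        rw [if_neg hcond, if_neg hx]
        ring
    have hsum := Finset.sum_congr rfl (fun x (_ : x ∈ Finset.univ) => hterm x)
    rw [hsum, Finset.sum_ite_eq'] at e3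
    simp only [Finset.mem_univ, if_true] at e3
    have hc2 : ((-2 : ℝ)) ^ ((j0 : ℕ) + 1) ≠ 0 := pow_ne_zero _ (by norm_num)
    have h' := (mul_eq_zero.mp e3).resolve_left hc2
    linarith [h']
  -- key equation 4 : bottom-right block
  have key4 : ∀ j0 p : Fin k, ((p : ℕ) + 2) % k = ((j0 : ℕ) + 1) % k →
      (-2 : ℝ) ^ ((j0 : ℕ) + 1) * g (j0, 0) + (-2 : ℝ) ^ ((p : ℕ) + 2) * g (p, 3) = 0 := by
    intro j0 p hp2
    have hpne : p ≠ j0 := by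
      intro h
      subst h
      have ha : ((p : ℕ) + 1) % k < k := Nat.mod_lt _ hk0
      have : (((p : ℕ) + 1) % k + 1) % k = ((p : ℕ) + 1) % k := by
        rw [Nat.mod_add_mod]
        exact hp2
      exact aux_succ_mod_ne hk ha this
    have hr : ((j0 : ℕ) + 1) % k < k := Nat.mod_lt _ hk0
    have e4 := congrArg (fun M => M (finSumFinEquiv (Sum.inr (⟨((j0 : ℕ) + 1) % k, hr⟩ : Fin k)))
      (finSumFinEquiv (Sum.inr (⟨0, hk0⟩ : Fin k)))) hg
    simp only [Matrix.sum_apply, Matrix.add_apply, Matrix.smul_apply, hAap,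
      Matrix.reindex_apply, Matrix.submatrix_apply, Equiv.symm_apply_apply,
      fromBlocks_apply₂₂, Matrix.zero_apply, Matrix.neg_apply, smul_eq_mul,
      mul_zero, add_zero, zero_add, mul_one, hPp] at e4
    have hterm : ∀ x : Fin k,
        g (x, 0) * ((-2 : ℝ) ^ ((x : ℕ) + 1) *
            if ((j0 : ℕ) + 1) % k = ((x : ℕ) + 1) % k then 1 else 0) +
        g (x, 3) * ((-2 : ℝ) ^ ((x : ℕ) + 1) *
            (-2 * if ((j0 : ℕ) + 1) % k = ((x : ℕ) + 1 + 1) % k then 1 else 0)) =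
        (if x = j0 then (-2 : ℝ) ^ ((j0 : ℕ) + 1) * g (j0, 0) else 0) +
        (if x = p then (-2 : ℝ) ^ ((p : ℕ) + 2) * g (p, 3) else 0) := by
      intro x
      by_cases hx : x = j0
      · subst hx
        have hcond2 : ¬ (((x : ℕ) + 1) % k = ((x : ℕ) + 1 + 1) % k) := by
          intro hc
          have ha : ((x : ℕ) + 1) % k < k := Nat.mod_lt _ hk0
          apply aux_succ_mod_ne hk ha
          rw [Nat.mod_add_mod]
          exact hc.symm
        rw [if_pos rfl, if_neg hcond2, if_pos rfl, if_neg (show ¬ (x = p) from fun h => hpne h.symm)]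
        ring
      · by_cases hxp : x = p
        · subst hxp
          have hcond1 : ¬ (((j0 : ℕ) + 1) % k = ((x : ℕ) + 1) % k) :=
            fun hc => hx (Fin.ext (aux_mod_cancel 1 j0.isLt x.isLt hc)).symm
          have hcond2 : (((j0 : ℕ) + 1) % k = ((x : ℕ) + 1 + 1) % k) := hp2.symm
          rw [if_neg hcond1, if_pos hcond2, if_neg hx, if_pos rfl]
          ring
        · have hcond1 : ¬ (((j0 : ℕ) + 1) % k = ((x : ℕ) + 1) % k) :=
            fun hc => hx (Fin.ext (aux_mod_cancel 1 j0.isLt x.isLt hc)).symm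
          have hcond2 : ¬ (((j0 : ℕ) + 1) % k = ((x : ℕ) + 1 + 1) % k) := by
            intro hc
            have : ((x : ℕ) + 2) % k = ((p : ℕ) + 2) % k := hc.symm.trans hp2.symm
            exact hxp (Fin.ext (aux_mod_cancel 2 x.isLt p.isLt this))
          rw [if_neg hcond1, if_neg hcond2, if_neg hx, if_neg hxp]
          ring
    have hsum := Finset.sum_congr rfl (fun x (_ : x ∈ Finset.univ) => hterm x)
    rw [hsum, Finset.sum_add_distrib, Finset.sum_ite_eq', Finset.sum_ite_eq'] at e4
    simpa only [Finset.mem_univ, if_true] using e4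
  -- solve the linear system
  have hg1 : ∀ j : Fin k, g (j, 1) = g (j, 0) := by
    intro j; have := key1 j; have := key2 j; linarith
  have hg2 : ∀ j : Fin k, g (j, 2) = -g (j, 0) := by
    intro j; have := key1 j; linarith
  have hg3 : ∀ j : Fin k, g (j, 3) = -g (j, 0) := by
    intro j; have := key3 j; have := hg1 j; linarith
  have hstep : ∀ (i : ℕ) (h1 : i + 1 < k) (h0 : i < k),
      g (⟨i + 1, h1⟩, 0) = g (⟨i, h0⟩, 0) := by
    intro i h1 h0
    have hc : (-2 : ℝ) ^ (i + 1 + 1) * g (⟨i + 1, h1⟩, 0) +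
        (-2 : ℝ) ^ (i + 2) * g (⟨i, h0⟩, 3) = 0 := key4 ⟨i + 1, h1⟩ ⟨i, h0⟩ rfl
    rw [hg3] at hc
    have hcne : ((-2 : ℝ)) ^ (i + 2) ≠ 0 := pow_ne_zero _ (by norm_num)
    have h' : ((-2 : ℝ)) ^ (i + 2) * (g (⟨i + 1, h1⟩, 0) - g (⟨i, h0⟩, 0)) = 0 := by
      rw [← hc]; ring
    have := (mul_eq_zero.mp h').resolve_left hcne
    linarith [this]
  have hchain : ∀ (i : ℕ) (h : i < k), g (⟨i, h⟩, 0) = g (⟨0, hk0⟩, 0) := by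
    intro i
    induction i with
    | zero => intro h; rfl
    | succ i ih => intro h; rw [hstep i h (by omega), ih (by omega)]
  have hk1 : k - 1 < k := by omega
  have hcond0 : ((k - 1 : ℕ) + 2) % k = ((0 : ℕ) + 1) % k := by
    have h1 : k - 1 + 2 = k + 1 := by omega
    rw [h1, Nat.add_mod_left]
  have hlast : (-2 : ℝ) ^ (0 + 1) * g (⟨0, hk0⟩, 0) +
      (-2 : ℝ) ^ ((k - 1) + 2) * g (⟨k - 1, hk1⟩, 3) = 0 :=
    key4 ⟨0, hk0⟩ ⟨k - 1, hk1⟩ hcond0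
  rw [hg3, hchain (k - 1) hk1] at hlast
  have hexp : k - 1 + 2 = k + 1 := by omega
  rw [hexp] at hlast
  have hzero : g (⟨0, hk0⟩, 0) = 0 := by
    have hfac : g (⟨0, hk0⟩, 0) * ((-2 : ℝ) - (-2 : ℝ) ^ (k + 1)) = 0 := by
      rw [← hlast]; ring
    have hne : ((-2 : ℝ)) - (-2 : ℝ) ^ (k + 1) ≠ 0 := by
      intro h
      have h' : ((-2 : ℝ)) ^ (k + 1) = -2 := by linarith
      have habs := congrArg abs h'
      rw [abs_pow] at habs
      norm_num at habs
      have hlt : (2 : ℝ) ^ 1 < 2 ^ (k + 1) :=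
        pow_lt_pow_right₀ (by norm_num) (by omega)
      rw [habs] at hlt
      norm_num at hlt
    exact (mul_eq_zero.mp hfac).resolve_right hne
  have hall0 : ∀ j : Fin k, g (j, 0) = 0 := by
    intro j
    have : g (j, 0) = g (⟨(j : ℕ), j.isLt⟩, 0) := rfl
    rw [this, hchain (j : ℕ) j.isLt, hzero]
  intro p
  obtain ⟨x, t⟩ := p
  fin_cases t
  · exact hall0 x
  · exact (hg1 x).trans (hall0 x)
  · exact (hg2 x).trans (by rw [hall0]; exact neg_zero)
  · exact (hg3 x).trans (by rw [hall0]; exact neg_zero)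
end

section
/- Let E and F be n×n positive idempotent matrices with EF ≥ FE entrywise, and suppose the multiplicative semigroup generated by E and F consists only of idempotent matrices. Then that semigroup equals {E, F, EF, FE, EFE, FEF}. -/
set_option maxHeartbeats 2000000 in
theorem stmt_17 (n : ℕ) (E F : Matrix (Fin n) (Fin n) ℝ)
    (hE : E * E = E) (hF : F * F = F)
    (hEpos : ∀ i j, 0 ≤ E i j) (hFpos : ∀ i j, 0 ≤ F i j)
    (hcomm : ∀ i j, (F * E) i j ≤ (E * F) i j)
    (hidem : ∀ M ∈ Subsemigroup.closure {E, F}, M * M = M) :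
    (Subsemigroup.closure {E, F} : Set (Matrix (Fin n) (Fin n) ℝ)) =
      {E, F, E * F, F * E, E * F * E, F * E * F} := by
  have hEmem : E ∈ Subsemigroup.closure ({E, F} : Set (Matrix (Fin n) (Fin n) ℝ)) :=
    Subsemigroup.subset_closure (by simp)
  have hFmem : F ∈ Subsemigroup.closure ({E, F} : Set (Matrix (Fin n) (Fin n) ℝ)) :=
    Subsemigroup.subset_closure (by simp)
  have h1 : E * F * (E * F) = E * F := hidem _ (mul_mem hEmem hFmem)
  have h2 : F * E * (F * E) = F * E := hidem _ (mul_mem hFmem hEmem)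
  have h1l : E * F * E * F = E * F := by rw [mul_assoc (E*F) E F]; exact h1
  have h2l : F * E * F * E = F * E := by rw [mul_assoc (F*E) F E]; exact h2
  have hEE : ∀ X, E * (E * X) = E * X := fun X => by rw [← mul_assoc, hE]
  have hFF : ∀ X, F * (F * X) = F * X := fun X => by rw [← mul_assoc, hF]
  have hEFEF : ∀ X, E * (F * (E * (F * X))) = E * (F * X) := fun X => by
    simp only [← mul_assoc]; rw [h1l]
  have hFEFE : ∀ X, F * (E * (F * (E * X))) = F * (E * X) := fun X => by
    simp only [← mul_assoc]; rw [h2l]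
  have h1r : E * (F * (E * F)) = E * F := by rw [← mul_assoc]; exact h1
  have h2r : F * (E * (F * E)) = F * E := by rw [← mul_assoc]; exact h2
  set S : Subsemigroup (Matrix (Fin n) (Fin n) ℝ) :=
    { carrier := {E, F, E * F, F * E, E * F * E, F * E * F}
      mul_mem' := by
        intro a b ha hb
        simp only [Set.mem_insert_iff, Set.mem_singleton_iff] at ha hb ⊢
        rcases ha with rfl | rfl | rfl | rfl | rfl | rfl <;>
          rcases hb with rfl | rfl | rfl | rfl | rfl | rfl <;>
          simp only [mul_assoc, hE, hF, hEE, hFF, hEFEF, hFEFE, h1r, h2r] <;>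
          tauto } with hS
  apply le_antisymm
  · have hle : Subsemigroup.closure ({E, F} : Set (Matrix (Fin n) (Fin n) ℝ)) ≤ S := by
      apply Subsemigroup.closure_le.mpr
      intro x hx
      rcases hx with rfl | hx
      · exact Or.inl rfl
      · exact Or.inr (Or.inl hx)
    exact fun x hx => hle hx
  · intro x hx
    rcases hx with rfl | rfl | rfl | rfl | rfl | rfl
    · exact hEmem
    · exact hFmem
    · exact mul_mem hEmem hFmem
    · exact mul_mem hFmem hEmem
    · exact mul_mem (mul_mem hEmem hFmem) hEmem
    · exact mul_mem (mul_mem hFmem hEmem) hFmem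
end

section
/- Let A be an n×n positive matrix with n distinct eigenvalues, and let B₁,...,B_k be positive n×n matrices with AB_i ≥ B_iA entrywise for each i. Then the family {A, B₁, ..., B_k} is simultaneously triangularizable (there is an invertible matrix T such that T⁻¹AT and each T⁻¹B_iT are upper triangular). -/
/-!
Let `𝒮` be the set of entrywise nonnegative `X` with `X * A ≤ A * X` entrywise; it is a monoid
containing `A` and every `B l`. For `X, Y ∈ 𝒮` one has
`X * Y * A ^ m ≤ X * A ^ m * Y ≤ A ^ m * X * Y` entrywise, and the outer two have the same trace,
so the trace of a word in `A` and the `B l` depends only on the sequence of `B`'s and the total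
power of `A`.

Over `ℂ`, diagonalise `A = S * D * S⁻¹` with `D = diagonal d`, `d` injective, and put
`B' l = S⁻¹ * B l * S`.
The trace of `D ^ b₀ * B' l₁ * D ^ b₁ * ⋯ * B' lₜ * D ^ bₜ` is a sum over closed walks of the
products of the entries of the `B'` along the walk, weighted by `∏ d (τ v) ^ b v`; letting the
exponents vary, a Vandermonde argument shows that every nonconstant closed walk has product zero.
Hence the graph with an edge `r → s` whenever `r ≠ s` and some `B' l r s ≠ 0` is acyclic, and
listing the eigenvectors along a topological order of it makes `A` and all `B l` upper triangular.
-/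

open Matrix

namespace Matrix

variable {ι R : Type*}

def EntrywiseLE [LE R] (X Y : Matrix ι ι R) : Prop := ∀ i j, X i j ≤ Y i j

scoped infix:50 " ≤ₑ " => EntrywiseLE

theorem EntrywiseLE.refl [Preorder R] (X : Matrix ι ι R) : X ≤ₑ X := fun _ _ => le_rfl

theorem EntrywiseLE.trans [Preorder R] {X Y Z : Matrix ι ι R} (h₁ : X ≤ₑ Y) (h₂ : Y ≤ₑ Z) :
    X ≤ₑ Z :=
  fun i j => (h₁ i j).trans (h₂ i j)

instance [Preorder R] : @Trans (Matrix ι ι R) (Matrix ι ι R) (Matrix ι ι R)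
    EntrywiseLE EntrywiseLE EntrywiseLE :=
  ⟨EntrywiseLE.trans⟩

section Order

variable [Fintype ι] [CommSemiring R] [PartialOrder R] [IsOrderedRing R] {X X' Y Y' : Matrix ι ι R}

theorem EntrywiseLE.mul_left (h : Y ≤ₑ Y') (hX : 0 ≤ₑ X) : X * Y ≤ₑ X * Y' := fun i j =>
  Finset.sum_le_sum fun l _ => mul_le_mul_of_nonneg_left (h l j) (hX i l)

theorem EntrywiseLE.mul_right (h : X ≤ₑ X') (hY : 0 ≤ₑ Y) : X * Y ≤ₑ X' * Y := fun i j =>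
  Finset.sum_le_sum fun l _ => mul_le_mul_of_nonneg_right (h i l) (hY l j)

theorem EntrywiseLE.mul_nonneg (hX : 0 ≤ₑ X) (hY : 0 ≤ₑ Y) : 0 ≤ₑ X * Y := by
  simpa using EntrywiseLE.mul_right hX hY

theorem EntrywiseLE.trace_le (h : X ≤ₑ Y) : trace X ≤ trace Y :=
  Finset.sum_le_sum fun i _ => h i i

variable [DecidableEq ι]

omit [Fintype ι] in
theorem zero_entrywiseLE_one : (0 : Matrix ι ι R) ≤ₑ 1 := fun i j => by
  rw [one_apply]; split_ifs <;> simp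

def nonnegCommutatorSubmonoid (A : Matrix ι ι R) : Submonoid (Matrix ι ι R) where
  carrier := {X | 0 ≤ₑ X ∧ X * A ≤ₑ A * X}
  one_mem' := ⟨zero_entrywiseLE_one, by simpa using EntrywiseLE.refl A⟩
  mul_mem' := by
    rintro X Y ⟨hX, hXA⟩ ⟨hY, hYA⟩
    refine ⟨hX.mul_nonneg hY, ?_⟩
    calc X * Y * A = X * (Y * A) := mul_assoc ..
      _ ≤ₑ X * (A * Y) := hYA.mul_left hX
      _ = X * A * Y := (mul_assoc ..).symm
      _ ≤ₑ A * X * Y := hXA.mul_right hY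
      _ = A * (X * Y) := mul_assoc ..

variable {A : Matrix ι ι R}

theorem self_mem_nonnegCommutatorSubmonoid (hA : 0 ≤ₑ A) : A ∈ nonnegCommutatorSubmonoid A :=
  ⟨hA, EntrywiseLE.refl _⟩

theorem nonnegCommutatorSubmonoid_le_pow (hA : 0 ≤ₑ A) (m : ℕ) :
    nonnegCommutatorSubmonoid A ≤ nonnegCommutatorSubmonoid (A ^ m) := by
  rintro X ⟨hX, hXA⟩
  refine ⟨hX, ?_⟩
  induction m with
  | zero => simpa using EntrywiseLE.refl X
  | succ m ih =>
    have hAm : 0 ≤ₑ A ^ m := ((nonnegCommutatorSubmonoid A).pow_mem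
      (self_mem_nonnegCommutatorSubmonoid hA) m).1
    calc X * A ^ (m + 1) = X * A ^ m * A := by rw [pow_succ, mul_assoc]
      _ ≤ₑ A ^ m * X * A := ih.mul_right hA
      _ = A ^ m * (X * A) := mul_assoc ..
      _ ≤ₑ A ^ m * (A * X) := hXA.mul_left hAm
      _ = A ^ (m + 1) * X := by rw [pow_succ, mul_assoc]

theorem trace_mul_mul_eq_of_mem {M : Matrix ι ι R} (hX : X ∈ nonnegCommutatorSubmonoid M)
    (hY : Y ∈ nonnegCommutatorSubmonoid M) : trace (X * M * Y) = trace (M * X * Y) := by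
  refine le_antisymm (hX.2.mul_right hY.1).trace_le ?_
  calc trace (M * X * Y) = trace (X * (Y * M)) := by rw [mul_assoc, trace_mul_comm, mul_assoc]
    _ ≤ trace (X * (M * Y)) := (hY.2.mul_left hX.1).trace_le
    _ = trace (X * M * Y) := by rw [mul_assoc]

theorem trace_mul_list_prod_ofFn_mul_pow (hA : 0 ≤ₑ A) {t : ℕ} (Y : Fin t → Matrix ι ι R)
    (hY : ∀ u, Y u ∈ nonnegCommutatorSubmonoid A) (a : Fin t → ℕ)
    (hX : X ∈ nonnegCommutatorSubmonoid A) :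
    trace (X * (List.ofFn fun u => Y u * A ^ a u).prod)
      = trace (A ^ (∑ u, a u) * X * (List.ofFn Y).prod) := by
  induction t generalizing X with
  | zero => simp
  | succ t ih =>
    have hApow := pow_mem (self_mem_nonnegCommutatorSubmonoid hA)
    have hle := nonnegCommutatorSubmonoid_le_pow hA (a 0)
    have hrest : (List.ofFn fun u => Y u.succ * A ^ a u.succ).prod ∈ nonnegCommutatorSubmonoid A :=
      Submonoid.list_prod_mem _ <| List.forall_mem_ofFn_iff.2 fun u => mul_mem (hY _) (hApow _)
    have hX' : A ^ a 0 * X * Y 0 ∈ nonnegCommutatorSubmonoid A :=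
      mul_mem (mul_mem (hApow _) hX) (hY 0)
    simp only [List.ofFn_succ, List.prod_cons]
    rw [← mul_assoc, ← mul_assoc, trace_mul_mul_eq_of_mem (hle (mul_mem hX (hY 0))) (hle hrest),
      ← mul_assoc, ih (fun u => Y u.succ) (fun u => hY _) (fun u => a u.succ) hX',
      Fin.sum_univ_succ, pow_add, pow_mul_comm]
    simp only [mul_assoc]

end Order

end Matrix

theorem Fin.sum_univ_fun_succ {α M : Type*} [Fintype α] [AddCommMonoid M] {m : ℕ}
    (F : (Fin (m + 1) → α) → M) : ∑ τ, F τ = ∑ x, ∑ ρ : Fin m → α, F (Fin.cons x ρ) := by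
  rw [← (Fin.consEquiv fun _ => α).sum_comp, Fintype.sum_prod_type]
  rfl

namespace Matrix

variable {ι R : Type*} [CommSemiring R] {t : ℕ}

def pathProd (N : Fin t → Matrix ι ι R) (τ : Fin (t + 1) → ι) : R :=
  ∏ u, N u (τ u.castSucc) (τ u.succ)

theorem pathProd_cons (N : Fin (t + 1) → Matrix ι ι R) (x : ι) (ρ : Fin (t + 1) → ι) :
    pathProd N (Fin.cons x ρ) = N 0 x (ρ 0) * pathProd (fun u => N u.succ) ρ := by
  simp [pathProd, Fin.prod_univ_succ]

variable [Fintype ι] [DecidableEq ι]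

theorem pathProd_mul_diagonal (N : Fin t → Matrix ι ι R) (g : Fin t → ι → R)
    (τ : Fin (t + 1) → ι) :
    pathProd (fun u => N u * diagonal (g u)) τ = pathProd N τ * ∏ u, g u (τ u.succ) := by
  simp [pathProd, mul_diagonal, Finset.prod_mul_distrib]

theorem list_prod_ofFn_apply (N : Fin t → Matrix ι ι R) (i j : ι) :
    (List.ofFn N).prod i j
      = ∑ τ : Fin (t + 1) → ι, if τ 0 = i ∧ τ (Fin.last t) = j then pathProd N τ else 0 := by
  induction t generalizing i with
  | zero =>
    rw [Fin.sum_univ_fun_succ]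
    simp [pathProd, one_apply, ite_and, Finset.sum_ite_eq']
  | succ t ih =>
    rw [List.ofFn_succ, List.prod_cons, mul_apply, Fin.sum_univ_fun_succ]
    simp only [ih, Finset.mul_sum]
    rw [Finset.sum_comm]
    simp only [Fin.cons_zero, ← Fin.succ_last, Fin.cons_succ, pathProd_cons, mul_ite, mul_zero,
      ite_and, Finset.sum_ite_eq, Finset.mem_univ, if_true, Finset.sum_ite_irrel,
      Finset.sum_const_zero, Finset.sum_ite_eq']

theorem trace_diagonal_mul_list_prod_ofFn (f : ι → R) (N : Fin t → Matrix ι ι R) :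
    trace (diagonal f * (List.ofFn N).prod)
      = ∑ τ : Fin (t + 1) → ι, if τ (Fin.last t) = τ 0 then f (τ 0) * pathProd N τ else 0 := by
  simp_rw [trace, diag, diagonal_mul, list_prod_ofFn_apply, Finset.mul_sum, mul_ite, mul_zero]
  rw [Finset.sum_comm]
  refine Finset.sum_congr rfl fun τ _ => ?_
  simp [ite_and, eq_comm]

end Matrix

section Vandermonde

variable {K : Type*} [CommRing K] [IsDomain K] {n : ℕ} {d : Fin n → K}

theorem eq_zero_of_forall_sum_mul_prod_pow_eq_zero (hd : Function.Injective d) {m : ℕ}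
    {g : (Fin m → Fin n) → K} (h : ∀ b : Fin m → ℕ, ∑ τ, g τ * ∏ v, d (τ v) ^ b v = 0) :
    g = 0 := by
  induction m with
  | zero =>
    ext τ
    simpa [Subsingleton.elim τ default] using h 0
  | succ m ih =>
    suffices ∀ x, (fun ρ => g (Fin.cons x ρ)) = 0 by
      ext τ
      simpa [Fin.cons_self_tail] using congrFun (this (τ 0)) (Fin.tail τ)
    intro x
    refine ih fun b => congrFun (eq_zero_of_forall_pow_sum_mul_pow_eq_zero hd
      (v := fun x => ∑ ρ, g (Fin.cons x ρ) * ∏ v, d (ρ v) ^ b v) fun e => ?_) x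
    simpa [Fin.sum_univ_fun_succ, Fin.prod_univ_succ, Finset.sum_mul, Finset.mul_sum, mul_assoc,
      mul_comm, mul_left_comm] using h (Fin.cons (e : ℕ) b)

theorem apply_eq_zero_of_forall_sum_mul_prod_pow_eq (hd : Function.Injective d) {m : ℕ}
    {c : (Fin m → Fin n) → K} {y : Fin n → K}
    (h : ∀ b : Fin m → ℕ, ∑ τ, c τ * ∏ v, d (τ v) ^ b v = ∑ i, y i * ∏ v, d i ^ b v)
    {τ : Fin m → Fin n} (hτ : ∃ u v, τ u ≠ τ v) : c τ = 0 := by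
  -- the right-hand side is the same kind of sum, supported on the constant tuples
  have key := eq_zero_of_forall_sum_mul_prod_pow_eq_zero hd
    (g := fun τ => c τ - ∑ i, if τ = fun _ => i then y i else 0) fun b => by
      simp only [sub_mul, Finset.sum_sub_distrib, h, Finset.sum_mul, ite_mul, zero_mul]
      rw [Finset.sum_comm, sub_eq_zero]
      simp
  obtain ⟨u, v, huv⟩ := hτ
  have hconst : ∀ i, τ ≠ fun _ => i := fun i hi => huv (by simp [hi])
  simpa [hconst] using congrFun key τ

end Vandermonde

namespace Matrix

variable {K : Type*} [CommRing K] [IsDomain K] {n t : ℕ} {d : Fin n → K}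

theorem pathProd_eq_zero_of_forall_trace_eq (hd : Function.Injective d)
    (N : Fin t → Matrix (Fin n) (Fin n) K)
    (h : ∀ b : Fin (t + 1) → ℕ,
      trace (diagonal d ^ b 0 * (List.ofFn fun u => N u * diagonal d ^ b u.succ).prod)
        = trace (diagonal d ^ (∑ v, b v) * (List.ofFn N).prod))
    {τ : Fin (t + 1) → Fin n} (hclosed : τ (Fin.last t) = τ 0) (hτ : ∃ u, τ u ≠ τ 0) :
    pathProd N τ = 0 := by
  obtain ⟨u, hu⟩ := hτ
  have := apply_eq_zero_of_forall_sum_mul_prod_pow_eq hd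
    (c := fun τ => if τ (Fin.last t) = τ 0 then pathProd N τ else 0)
    (y := fun i => (List.ofFn N).prod i i) (fun b => ?_) ⟨u, 0, hu⟩
  · simpa [hclosed] using this
  calc ∑ τ, (if τ (Fin.last t) = τ 0 then pathProd N τ else 0) * ∏ v, d (τ v) ^ b v
      = trace (diagonal d ^ b 0 * (List.ofFn fun u => N u * diagonal d ^ b u.succ).prod) := by
        simp only [diagonal_pow, trace_diagonal_mul_list_prod_ofFn, pathProd_mul_diagonal]
        refine Finset.sum_congr rfl fun τ _ => ?_
        split_ifs
        · simp only [Fin.prod_univ_succ, Pi.pow_apply]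
          ring
        · simp
    _ = trace (diagonal d ^ (∑ v, b v) * (List.ofFn N).prod) := h b
    _ = ∑ i, (List.ofFn N).prod i i * ∏ v, d i ^ b v := by
        simp [diagonal_pow, trace, diagonal_mul, Finset.prod_pow_eq_pow_sum, mul_comm]

end Matrix

namespace Matrix

theorem pathProd_conj_map_eq_zero {R K : Type*} [CommSemiring R] [PartialOrder R]
    [IsOrderedRing R] [Field K] (f : R →+* K) {n t : ℕ} {A : Matrix (Fin n) (Fin n) R}
    (hA : 0 ≤ₑ A) {S : Matrix (Fin n) (Fin n) K} (hS : IsUnit S) {d : Fin n → K}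
    (hd : Function.Injective d) (hSA : S⁻¹ * A.map f * S = diagonal d)
    (Y : Fin t → Matrix (Fin n) (Fin n) R) (hY : ∀ u, Y u ∈ nonnegCommutatorSubmonoid A)
    {τ : Fin (t + 1) → Fin n} (hclosed : τ (Fin.last t) = τ 0) (hτ : ∃ u, τ u ≠ τ 0) :
    pathProd (fun u => S⁻¹ * (Y u).map f * S) τ = 0 := by
  let φ : Matrix (Fin n) (Fin n) R →+* Matrix (Fin n) (Fin n) K :=
    (MulSemiringAction.toRingHom _ _ (ConjAct.toConjAct hS.unit⁻¹)).comp f.mapMatrix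
  have hφ : ∀ X, φ X = S⁻¹ * X.map f * S := fun X => by
    simp [φ, ConjAct.units_smul_def]
  have htrace : ∀ X, trace (φ X) = f (trace X) := fun X => by
    rw [hφ, trace_conj' hS, AddMonoidHom.map_trace]
  refine pathProd_eq_zero_of_forall_trace_eq hd _ (fun b => ?_) hclosed hτ
  have key := congrArg f (trace_mul_list_prod_ofFn_mul_pow hA Y hY (fun u => b u.succ)
    (pow_mem (self_mem_nonnegCommutatorSubmonoid hA) (b 0)))
  have hsum : ∑ u : Fin t, b u.succ + b 0 = ∑ v, b v := by rw [Fin.sum_univ_succ, add_comm]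
  rw [← htrace, ← htrace, ← pow_add, hsum] at key
  have hφA : φ A = diagonal d := (hφ A).trans hSA
  simp only [map_mul, map_pow, map_list_prod, List.map_ofFn, Function.comp_def, hφA] at key
  simpa only [← hφ] using key

end Matrix

theorem Relation.TransGen.exists_fin_walk {α : Type*} {r : α → α → Prop} {a b : α}
    (h : Relation.TransGen r a b) :
    ∃ (t : ℕ) (τ : Fin (t + 2) → α), τ 0 = a ∧ τ (Fin.last (t + 1)) = b ∧
      ∀ u : Fin (t + 1), r (τ u.castSucc) (τ u.succ) := by
  induction h using Relation.TransGen.head_induction_on with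
  | single hab => exact ⟨0, ![_, b], rfl, rfl, fun u => by simpa [Fin.fin_one_eq_zero u] using hab⟩
  | head hac _ ih =>
    obtain ⟨t, τ, h0, hlast, hstep⟩ := ih
    refine ⟨t + 1, Fin.cons _ τ, rfl, by simpa [← Fin.succ_last] using hlast, fun u => ?_⟩
    cases u using Fin.cases with
    | zero => simpa [h0] using hac
    | succ u => simpa [← Fin.succ_castSucc] using hstep u

theorem exists_perm_lt_of_acyclic {n : ℕ} (E : Fin n → Fin n → Prop)
    (h : ∀ v, ¬ Relation.TransGen E v v) :
    ∃ σ : Equiv.Perm (Fin n), ∀ i j, E (σ i) (σ j) → i < j := by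
  -- the number of ancestors strictly increases along edges
  let height v := {x | Relation.ReflTransGen E x v}.ncard
  have height_lt : ∀ r s, E r s → height r < height s := fun r s hrs =>
    Set.ncard_lt_ncard (ssubset_iff_subset_not_subset.2
      ⟨fun x hx => Relation.ReflTransGen.tail hx hrs,
       fun hsub => h s (Relation.TransGen.tail' (hsub Relation.ReflTransGen.refl) hrs)⟩)
      (Set.toFinite _)
  refine ⟨Tuple.sort height, fun i j hij => lt_of_not_ge fun hji => ?_⟩
  exact (height_lt _ _ hij).not_ge (Tuple.monotone_sort height hji)

theorem Matrix.exists_perm_blockTriangular_submatrix {K κ : Type*} [CommRing K] [IsDomain K] {n : ℕ}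
    (N : κ → Matrix (Fin n) (Fin n) K)
    (h : ∀ (t : ℕ) (l : Fin t → κ) (τ : Fin (t + 1) → Fin n), τ (Fin.last t) = τ 0 →
      (∃ u, τ u ≠ τ 0) → pathProd (fun u => N (l u)) τ = 0) :
    ∃ σ : Equiv.Perm (Fin n), ∀ l, ((N l).submatrix σ σ).BlockTriangular id := by
  have hacyclic : ∀ v, ¬ Relation.TransGen (fun r s => r ≠ s ∧ ∃ l, N l r s ≠ 0) v v := by
    intro v hv
    obtain ⟨t, τ, h0, hlast, hstep⟩ := hv.exists_fin_walk
    choose l hl using fun u => (hstep u).2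
    refine Finset.prod_ne_zero_iff.2 (fun u _ => hl u) (h (t + 1) l τ (hlast.trans h0.symm) ?_)
    exact ⟨1, fun h10 => (hstep 0).1 h10.symm⟩
  obtain ⟨σ, hσ⟩ := exists_perm_lt_of_acyclic _ hacyclic
  exact ⟨σ, fun l i j hij => by_contra fun hne =>
    lt_asymm hij (hσ i j ⟨σ.injective.ne hij.ne', l, hne⟩)⟩

theorem Matrix.exists_isUnit_inv_mul_mul_eq_diagonal {K ι : Type*} [Field K] [DecidableEq K]
    [Fintype ι] [DecidableEq ι] (M : Matrix ι ι K)
    (h : M.charpoly.roots.toFinset.card = Fintype.card ι) :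
    ∃ (S : Matrix ι ι K) (d : ι → K), IsUnit S ∧ Function.Injective d ∧
      S⁻¹ * M * S = diagonal d := by
  let e : ι ≃ M.charpoly.roots.toFinset := Fintype.equivOfCardEq (by simp [h])
  let d i : K := e i
  have hd : Function.Injective d := fun i j hij => e.injective (Subtype.ext hij)
  have hev : ∀ i, Module.End.HasEigenvalue (toLin' M) (d i) := fun i => by
    rw [Module.End.hasEigenvalue_iff_isRoot_charpoly, charpoly_toLin']
    exact Polynomial.isRoot_of_mem_roots (Multiset.mem_toFinset.1 (e i).2)
  choose v hv using fun i => (hev i).exists_hasEigenvector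
  let S : Matrix ι ι K := of fun a i => v i a
  have hS : IsUnit S := linearIndependent_cols_iff_isUnit.1
    (Module.End.eigenvectors_linearIndependent' _ d hd v hv)
  have hMS : M * S = S * diagonal d := by
    ext a i
    rw [mul_diagonal, mul_apply]
    simpa [S, mulVec, dotProduct, mul_comm] using congrFun (hv i).apply_eq_smul a
  refine ⟨S, d, hS, hd, ?_⟩
  rw [mul_assoc, hMS, nonsing_inv_mul_cancel_left _ _ ((isUnit_iff_isUnit_det S).1 hS)]

theorem Matrix.submatrix_inv_mul_mul_submatrix {n α : Type*} [Fintype n] [DecidableEq n]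
    [CommRing α] (S X : Matrix n n α) (σ : Equiv.Perm n) :
    (S.submatrix id σ)⁻¹ * X * S.submatrix id σ = (S⁻¹ * X * S).submatrix σ σ := by
  rw [submatrix_mul _ _ _ id _ Function.bijective_id,
    submatrix_mul _ _ _ id _ Function.bijective_id, submatrix_id_id]
  exact congrArg (· * X * _) (inv_submatrix_equiv S (Equiv.refl n) σ)


theorem stmt_18 (n k : ℕ) (A : Matrix (Fin n) (Fin n) ℝ)
    (B : Fin k → Matrix (Fin n) (Fin n) ℝ)
    (hApos : ∀ i j, 0 ≤ A i j) (hBpos : ∀ l i j, 0 ≤ B l i j)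
    (hdist : ((A.map (algebraMap ℝ ℂ)).charpoly.roots).toFinset.card = n)
    (hcomm : ∀ l i j, ((B l) * A) i j ≤ (A * (B l)) i j) :
    ∃ T : Matrix (Fin n) (Fin n) ℂ, IsUnit T ∧
      (∀ i j : Fin n, j < i → (T⁻¹ * A.map (algebraMap ℝ ℂ) * T) i j = 0) ∧
      ∀ l : Fin k, ∀ i j : Fin n, j < i →
        (T⁻¹ * (B l).map (algebraMap ℝ ℂ) * T) i j = 0 := by
  obtain ⟨S, d, hS, hd, hSA⟩ := exists_isUnit_inv_mul_mul_eq_diagonal (A.map (algebraMap ℝ ℂ))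
    (by rwa [Fintype.card_fin])
  obtain ⟨σ, hσ⟩ := exists_perm_blockTriangular_submatrix
    (fun l => S⁻¹ * (B l).map (algebraMap ℝ ℂ) * S) fun t l τ hclosed hτ =>
      pathProd_conj_map_eq_zero _ hApos hS hd hSA (fun u => B (l u))
        (fun u => ⟨hBpos (l u), hcomm (l u)⟩) hclosed hτ
  refine ⟨S.submatrix id σ, (isUnit_submatrix_equiv (Equiv.refl _) σ).2 hS, fun i j hij => ?_,
    fun l i j hij => ?_⟩
  · rw [submatrix_inv_mul_mul_submatrix, hSA, submatrix_diagonal_equiv]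
    exact blockTriangular_diagonal (b := id) _ hij
  · rw [submatrix_inv_mul_mul_submatrix]
    exact hσ l hij
end

section
/- Let E and F be n×n positive idempotent matrices with EF ≥ FE entrywise, and suppose all the matrices E, F, EF, FE, EFE, FEF are idempotent. Then the product FEF·EFE and all longer alternating products of E and F lie in {E, F, EF, FE, EFE, FEF}, so the unital algebra generated by E and F has dimension at most 7. -/
private lemma stmt_19_aux {R : Type*} [Semigroup R] (E F : R)
    (hE : E * E = E) (hF : F * F = F)
    (hEF : (E * F) * (E * F) = E * F) (hFE : (F * E) * (F * E) = F * E) :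
    ∀ a ∈ ({E, F, E * F, F * E, E * F * E, F * E * F} : Set R),
    ∀ b ∈ ({E, F, E * F, F * E, E * F * E, F * E * F} : Set R),
      a * b ∈ ({E, F, E * F, F * E, E * F * E, F * E * F} : Set R) := by
  have hE2 : ∀ X : R, E * (E * X) = E * X := fun X => by rw [← mul_assoc, hE]
  have hF2 : ∀ X : R, F * (F * X) = F * X := fun X => by rw [← mul_assoc, hF]
  have hEF1 : E * (F * (E * F)) = E * F := by rw [← mul_assoc]; exact hEF
  have hFE1 : F * (E * (F * E)) = F * E := by rw [← mul_assoc]; exact hFE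
  have hEF2 : ∀ X : R, E * (F * (E * (F * X))) = E * (F * X) := fun X => by
    have h : E * (F * (E * (F * X))) = (E * (F * (E * F))) * X := by
      simp only [mul_assoc]
    rw [h, hEF1, mul_assoc]
  have hFE2 : ∀ X : R, F * (E * (F * (E * X))) = F * (E * X) := fun X => by
    have h : F * (E * (F * (E * X))) = (F * (E * (F * E))) * X := by
      simp only [mul_assoc]
    rw [h, hFE1, mul_assoc]
  intro a ha b hb
  simp only [Set.mem_insert_iff, Set.mem_singleton_iff] at ha hb ⊢
  rcases ha with rfl|rfl|rfl|rfl|rfl|rfl <;> rcases hb with rfl|rfl|rfl|rfl|rfl|rfl <;>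
    simp [mul_assoc, hE, hF, hE2, hF2, hEF1, hFE1, hEF2, hFE2]

theorem stmt_19 (n : ℕ) (E F : Matrix (Fin n) (Fin n) ℝ)
    (hE : E * E = E) (hF : F * F = F)
    (hEpos : ∀ i j, 0 ≤ E i j) (hFpos : ∀ i j, 0 ≤ F i j)
    (hcomm : ∀ i j, (F * E) i j ≤ (E * F) i j)
    (hidem : ∀ M ∈ Subsemigroup.closure {E, F}, M * M = M) :
    (∀ M ∈ Subsemigroup.closure {E, F},
      M ∈ ({E, F, E * F, F * E, E * F * E, F * E * F} : Set (Matrix (Fin n) (Fin n) ℝ))) ∧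
    Module.finrank ℝ (Algebra.adjoin ℝ {E, F} : Subalgebra ℝ (Matrix (Fin n) (Fin n) ℝ)) ≤ 7 := by
  classical
  have hEmem : E ∈ Subsemigroup.closure ({E, F} : Set (Matrix (Fin n) (Fin n) ℝ)) :=
    Subsemigroup.subset_closure (by simp)
  have hFmem : F ∈ Subsemigroup.closure ({E, F} : Set (Matrix (Fin n) (Fin n) ℝ)) :=
    Subsemigroup.subset_closure (by simp)
  have hmul := stmt_19_aux E F hE hF (hidem _ (mul_mem hEmem hFmem))
    (hidem _ (mul_mem hFmem hEmem))
  set s : Set (Matrix (Fin n) (Fin n) ℝ) := {E, F, E * F, F * E, E * F * E, F * E * F} with hs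
  have hSub : ∀ M ∈ Subsemigroup.closure ({E, F} : Set (Matrix (Fin n) (Fin n) ℝ)), M ∈ s := by
    intro M hM
    refine Subsemigroup.closure_induction (fun x hx => ?_) (fun x y _ _ hx hy => hmul _ hx _ hy) hM
    rcases hx with rfl|rfl
    · exact Set.mem_insert _ _
    · exact Set.mem_insert_of_mem _ (Set.mem_insert _ _)
  refine ⟨hSub, ?_⟩
  have hspan : (Subalgebra.toSubmodule (Algebra.adjoin ℝ ({E, F} : Set (Matrix (Fin n) (Fin n) ℝ))))
      ≤ Submodule.span ℝ (insert 1 s) := by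
    rw [Algebra.adjoin_eq_span, Submodule.span_le]
    rw [Submonoid.closure_eq_one_union]
    rintro x (rfl|hx)
    · exact Submodule.subset_span (Set.mem_insert _ _)
    · exact Submodule.subset_span (Set.mem_insert_of_mem _ (hSub x hx))
  have hsub2 : insert (1 : Matrix (Fin n) (Fin n) ℝ) s ⊆
      (↑({1, E, F, E * F, F * E, E * F * E, F * E * F} :
        Finset (Matrix (Fin n) (Fin n) ℝ)) : Set (Matrix (Fin n) (Fin n) ℝ)) := by
    intro x hx
    simp only [hs, Set.mem_insert_iff, Set.mem_singleton_iff] at hx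
    simp only [Finset.coe_insert, Finset.coe_singleton, Set.mem_insert_iff,
      Set.mem_singleton_iff]
    tauto
  have h1 : Module.finrank ℝ (Subalgebra.toSubmodule
      (Algebra.adjoin ℝ ({E, F} : Set (Matrix (Fin n) (Fin n) ℝ)))) ≤ 7 := by
    refine le_trans (Submodule.finrank_mono (le_trans hspan (Submodule.span_mono hsub2))) ?_
    refine le_trans (finrank_span_finset_le_card _) ?_
    refine le_trans (Finset.card_insert_le _ _) (Nat.succ_le_succ ?_)
    refine le_trans (Finset.card_insert_le _ _) (Nat.succ_le_succ ?_)
    refine le_trans (Finset.card_insert_le _ _) (Nat.succ_le_succ ?_)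
    refine le_trans (Finset.card_insert_le _ _) (Nat.succ_le_succ ?_)
    refine le_trans (Finset.card_insert_le _ _) (Nat.succ_le_succ ?_)
    refine le_trans (Finset.card_insert_le _ _) (Nat.succ_le_succ ?_)
    simp
  rwa [Subalgebra.finrank_toSubmodule] at h1
end
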